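/- arXiv:2402.08827 — 5 statements merged into one kernel-verified Lean document; each statement's English description precedes it below -/
import Mathlib

section
/- There exist no invertible matrix B ∈ ℚ^{2×2}, vector c ∈ ℚ², and positive rational number r such that the affine map x ↦ B(x − c) maps the ellipsoid {x ∈ ℝ² : 2x₁² + x₂² ≤ 1} onto the ball {x ∈ ℝ² : x₁² + x₂² ≤ r}. -/
open Matrix

-- auxiliary: if a continuous function of t is positive for all t>1, it is ≥ 0 at 1
lemma aux_nonneg (g : ℝ → ℝ) (hg : Continuous g) (h : ∀ t : ℝ, 1 < t → 0 < g t) :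
    0 ≤ g 1 := by
  have : Filter.Tendsto g (nhdsWithin 1 (Set.Ioi 1)) (nhds (g 1)) :=
    (hg.continuousAt).continuousWithinAt
  exact ge_of_tendsto this (Filter.eventually_of_mem self_mem_nhdsWithin
    fun t ht => (h t ht).le)

-- no rational square root of 2
lemma no_rat_sqrt_two (q : ℚ) : q ^ 2 ≠ 2 := by
  intro h
  have h2 : ((|q| : ℚ) : ℝ) * ((|q| : ℚ) : ℝ) = 2 := by
    push_cast
    rw [abs_mul_abs_self]
    exact_mod_cast (sq q ▸ h)
  have : Real.sqrt 2 = ((|q| : ℚ) : ℝ) := by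
    rw [Real.sqrt_eq_cases]
    exact Or.inl ⟨h2, by positivity⟩
  exact irrational_sqrt_two ⟨|q|, this.symm⟩

set_option maxHeartbeats 1000000 in
/-- There exist no invertible matrix `B ∈ ℚ^{2×2}`, vector `c ∈ ℚ²`,
and positive rational `r` such that the affine map `x ↦ B(x − c)` maps the ellipsoid
`{x ∈ ℝ² : 2x₁² + x₂² ≤ 1}` onto the ball `{x ∈ ℝ² : x₁² + x₂² ≤ r}`. -/
theorem stmt_0 :
    ¬ ∃ (B : Matrix (Fin 2) (Fin 2) ℚ) (c : Fin 2 → ℚ) (r : ℚ),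
      IsUnit B ∧ 0 < r ∧
      (fun x : Fin 2 → ℝ =>
          (B.map ((↑) : ℚ → ℝ)).mulVec (x - fun i => (c i : ℝ))) ''
        {x : Fin 2 → ℝ | 2 * x 0 ^ 2 + x 1 ^ 2 ≤ 1}
        = {x : Fin 2 → ℝ | x 0 ^ 2 + x 1 ^ 2 ≤ (r : ℝ)} := by
  rintro ⟨B, c, r, hU, hr, hset⟩
  -- real entries
  set b00 : ℝ := (B 0 0 : ℝ) with hb00
  set b01 : ℝ := (B 0 1 : ℝ) with hb01
  set b10 : ℝ := (B 1 0 : ℝ) with hb10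
  set b11 : ℝ := (B 1 1 : ℝ) with hb11
  set c0 : ℝ := (c 0 : ℝ) with hc0
  set c1 : ℝ := (c 1 : ℝ) with hc1
  -- the real matrix is invertible
  have hUr : IsUnit (B.map ((↑) : ℚ → ℝ)) := by
    have := hU.map (RingHom.mapMatrix (algebraMap ℚ ℝ))
    have hf : (⇑(algebraMap ℚ ℝ)) = ((↑) : ℚ → ℝ) := by funext q; exact eq_ratCast _ q
    simpa [RingHom.mapMatrix_apply, hf] using this
  have hinj : Function.Injective
      (fun x : Fin 2 → ℝ => (B.map ((↑) : ℚ → ℝ)).mulVec (x - fun i => (c i : ℝ))) := by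
    intro u v huv
    have h1 := (Matrix.mulVec_injective_iff_isUnit.mpr hUr) huv
    ext i
    have := congrFun h1 i
    simpa using this
  -- key equivalence with explicit coordinates
  have key : ∀ a b : ℝ, (2 * a ^ 2 + b ^ 2 ≤ 1) ↔
      ((b00 * (a - c0) + b01 * (b - c1)) ^ 2
        + (b10 * (a - c0) + b11 * (b - c1)) ^ 2 ≤ (r : ℝ)) := by
    intro a b
    have hmem : ∀ x : Fin 2 → ℝ, x ∈ {x : Fin 2 → ℝ | 2 * x 0 ^ 2 + x 1 ^ 2 ≤ 1} ↔
        ((B.map ((↑) : ℚ → ℝ)).mulVec (x - fun i => (c i : ℝ))) ∈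
          {x : Fin 2 → ℝ | x 0 ^ 2 + x 1 ^ 2 ≤ (r : ℝ)} := by
      intro x
      constructor
      · intro hx
        rw [← hset]
        exact ⟨x, hx, rfl⟩
      · intro hx
        rw [← hset] at hx
        obtain ⟨s, hs, hsx⟩ := hx
        have := hinj hsx
        rwa [← this]
    have := hmem ![a, b]
    simp only [Set.mem_setOf_eq, Matrix.cons_val_zero, Matrix.cons_val_one, Matrix.head_cons,
      Matrix.mulVec, dotProduct, Fin.sum_univ_two, Matrix.map_apply,
      Pi.sub_apply] at this
    convert this using 2 <;> ring
  -- on rational points of the ellipse, the quadratic vanishes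
  have hzero : ∀ a b : ℝ, 2 * a ^ 2 + b ^ 2 = 1 →
      (b00 * (a - c0) + b01 * (b - c1)) ^ 2
        + (b10 * (a - c0) + b11 * (b - c1)) ^ 2 - (r : ℝ) = 0 := by
    intro a b hab
    have hle : (b00 * (a - c0) + b01 * (b - c1)) ^ 2
        + (b10 * (a - c0) + b11 * (b - c1)) ^ 2 ≤ (r : ℝ) :=
      (key a b).mp (le_of_eq hab)
    have hge : (0:ℝ) ≤ (b00 * (1 * a - c0) + b01 * (1 * b - c1)) ^ 2
        + (b10 * (1 * a - c0) + b11 * (1 * b - c1)) ^ 2 - (r : ℝ) := by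
      apply aux_nonneg (fun t : ℝ => (b00 * (t * a - c0) + b01 * (t * b - c1)) ^ 2
        + (b10 * (t * a - c0) + b11 * (t * b - c1)) ^ 2 - (r : ℝ))
      · fun_prop
      · intro t ht
        have h1 : ¬ (2 * (t * a) ^ 2 + (t * b) ^ 2 ≤ 1) := by
          have : 2 * (t * a) ^ 2 + (t * b) ^ 2 = t ^ 2 := by
            have : 2 * (t * a) ^ 2 + (t * b) ^ 2 = t ^ 2 * (2 * a ^ 2 + b ^ 2) := by ring
            rw [this, hab, mul_one]
          rw [this]
          nlinarith
        have h2 := (key (t * a) (t * b)).not.mp h1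
        push_neg at h2
        linarith
    simp only [one_mul] at hge
    linarith
  -- six rational points on the ellipse give rational equations
  have e1 : (B 0 0 * ((0:ℚ) - c 0) + B 0 1 * (1 - c 1)) ^ 2
      + (B 1 0 * ((0:ℚ) - c 0) + B 1 1 * (1 - c 1)) ^ 2 - r = 0 := by
    have := hzero 0 1 (by norm_num)
    rw [hb00, hb01, hb10, hb11, hc0, hc1] at this
    rw [← Rat.cast_inj (α := ℝ)]
    push_cast
    linarith
  have e2 : (B 0 0 * ((0:ℚ) - c 0) + B 0 1 * (-1 - c 1)) ^ 2
      + (B 1 0 * ((0:ℚ) - c 0) + B 1 1 * (-1 - c 1)) ^ 2 - r = 0 := by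
    have := hzero 0 (-1) (by norm_num)
    rw [hb00, hb01, hb10, hb11, hc0, hc1] at this
    rw [← Rat.cast_inj (α := ℝ)]
    push_cast
    linarith
  have e3 : (B 0 0 * ((2/3:ℚ) - c 0) + B 0 1 * (1/3 - c 1)) ^ 2
      + (B 1 0 * ((2/3:ℚ) - c 0) + B 1 1 * (1/3 - c 1)) ^ 2 - r = 0 := by
    have := hzero (2/3) (1/3) (by norm_num)
    rw [hb00, hb01, hb10, hb11, hc0, hc1] at this
    rw [← Rat.cast_inj (α := ℝ)]
    push_cast
    linarith
  have e4 : (B 0 0 * ((2/3:ℚ) - c 0) + B 0 1 * (-(1/3) - c 1)) ^ 2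
      + (B 1 0 * ((2/3:ℚ) - c 0) + B 1 1 * (-(1/3) - c 1)) ^ 2 - r = 0 := by
    have := hzero (2/3) (-(1/3)) (by norm_num)
    rw [hb00, hb01, hb10, hb11, hc0, hc1] at this
    rw [← Rat.cast_inj (α := ℝ)]
    push_cast
    linarith
  have e5 : (B 0 0 * (-(2/3:ℚ) - c 0) + B 0 1 * (1/3 - c 1)) ^ 2
      + (B 1 0 * (-(2/3:ℚ) - c 0) + B 1 1 * (1/3 - c 1)) ^ 2 - r = 0 := by
    have := hzero (-(2/3)) (1/3) (by norm_num)
    rw [hb00, hb01, hb10, hb11, hc0, hc1] at this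
    rw [← Rat.cast_inj (α := ℝ)]
    push_cast
    linarith
  have e6 : (B 0 0 * (-(2/3:ℚ) - c 0) + B 0 1 * (-(1/3) - c 1)) ^ 2
      + (B 1 0 * (-(2/3:ℚ) - c 0) + B 1 1 * (-(1/3) - c 1)) ^ 2 - r = 0 := by
    have := hzero (-(2/3)) (-(1/3)) (by norm_num)
    rw [hb00, hb01, hb10, hb11, hc0, hc1] at this
    rw [← Rat.cast_inj (α := ℝ)]
    push_cast
    linarith
  -- linear algebra on the coefficients
  have hM01 : B 0 0 * B 0 1 + B 1 0 * B 1 1 = 0 := by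
    linear_combination (9/16 : ℚ) * e3 - (9/16 : ℚ) * e4 - (9/16 : ℚ) * e5 + (9/16 : ℚ) * e6
  have hM00 : B 0 0 ^ 2 + B 1 0 ^ 2 = 2 * (B 0 1 ^ 2 + B 1 1 ^ 2) := by
    linear_combination (9/16 : ℚ) * e3 + (9/16 : ℚ) * e4 + (9/16 : ℚ) * e5
      + (9/16 : ℚ) * e6 - (9/8 : ℚ) * e1 - (9/8 : ℚ) * e2
  set d : ℚ := B 0 0 * B 1 1 - B 0 1 * B 1 0 with hd
  set m : ℚ := B 0 1 ^ 2 + B 1 1 ^ 2 with hm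
  have hdet : d ^ 2 = 2 * m ^ 2 := by
    rw [hd, hm]
    linear_combination (B 0 1 ^ 2 + B 1 1 ^ 2) * hM00
      - (B 0 0 * B 0 1 + B 1 0 * B 1 1) * hM01
  have hdne : d ≠ 0 := by
    have h1 : IsUnit B.det := (Matrix.isUnit_iff_isUnit_det B).mp hU
    have h2 : B.det = d := by rw [Matrix.det_fin_two, hd]
    rw [h2] at h1
    exact h1.ne_zero
  have hmne : m ≠ 0 := by
    intro h
    apply hdne
    have h0 : d ^ 2 = 0 := by rw [hdet, h]; ring
    exact pow_eq_zero_iff two_ne_zero |>.mp h0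
  apply no_rat_sqrt_two (d / m)
  rw [div_pow, hdet, mul_div_assoc, div_self (pow_ne_zero 2 hmne), mul_one]
end

section
/- Let H be a symmetric matrix in ℝ^{n×n}, let h ∈ ℝⁿ, and let ε ∈ [0, 1/2]. Assume ‖H‖ ≤ ‖h‖. Let l ∈ ℝ be positive such that 1 − ε ≤ l·‖h‖ ≤ 1. Let s ∈ B((1−ε)·l·h, ε) and t ∈ B(−(1−ε)·l·h, ε). Then f(s) − f(t) ≥ 2(1 − 5ε)·‖h‖. -/
open Matrix

/-- The Euclidean norm of a vector in `ℝⁿ`. -/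
noncomputable def euclNorm {n : ℕ} (x : Fin n → ℝ) : ℝ := Real.sqrt (∑ i, x i ^ 2)

/-- The spectral norm (operator 2-norm) of a real `n × n` matrix. -/
noncomputable def specNorm {n : ℕ} (H : Matrix (Fin n) (Fin n) ℝ) : ℝ :=
  sSup {r : ℝ | ∃ x : Fin n → ℝ, euclNorm x = 1 ∧ r = euclNorm (H.mulVec x)}

/-- The Euclidean ball `B(c, r) = {x : ‖x − c‖ ≤ r}`. -/
noncomputable def eball {n : ℕ} (c : Fin n → ℝ) (r : ℝ) : Set (Fin n → ℝ) :=
  {x | euclNorm (x - c) ≤ r}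

/-- coercion into Euclidean space -/
noncomputable def toE {n : ℕ} (x : Fin n → ℝ) : EuclideanSpace ℝ (Fin n) :=
  (WithLp.equiv 2 (Fin n → ℝ)).symm x

lemma enorm_eq {n : ℕ} (x : Fin n → ℝ) : euclNorm x = ‖toE x‖ := by
  rw [EuclideanSpace.norm_eq]
  simp [euclNorm, toE, Real.norm_eq_abs, sq_abs]

lemma enorm_nonneg' {n : ℕ} (x : Fin n → ℝ) : 0 ≤ euclNorm x := by
  rw [enorm_eq]; positivity

lemma toE_add {n : ℕ} (x y : Fin n → ℝ) : toE (x + y) = toE x + toE y := rfl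
lemma toE_sub {n : ℕ} (x y : Fin n → ℝ) : toE (x - y) = toE x - toE y := rfl
lemma toE_smul {n : ℕ} (c : ℝ) (x : Fin n → ℝ) : toE (c • x) = c • toE x := rfl

lemma enorm_smul' {n : ℕ} (c : ℝ) (x : Fin n → ℝ) : euclNorm (c • x) = |c| * euclNorm x := by
  rw [enorm_eq, toE_smul, norm_smul, Real.norm_eq_abs, enorm_eq]

lemma dot_eq {n : ℕ} (x y : Fin n → ℝ) :
    x ⬝ᵥ y = (inner ℝ (toE x) (toE y) : ℝ) := by
  simp [dotProduct, toE, PiLp.inner_apply, RCLike.inner_apply, conj_trivial, mul_comm]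

lemma toEuc_apply {n : ℕ} (H : Matrix (Fin n) (Fin n) ℝ) (x : Fin n → ℝ) :
    Matrix.toEuclideanLin H (toE x) = toE (H.mulVec x) := by
  simp only [Matrix.toEuclideanLin_apply]; rfl

lemma mulVec_enorm_le {n : ℕ} (H : Matrix (Fin n) (Fin n) ℝ) (x : Fin n → ℝ) :
    euclNorm (H.mulVec x) ≤ specNorm H * euclNorm x := by
  set L := LinearMap.toContinuousLinearMap (Matrix.toEuclideanLin H) with hL
  have key : ∀ y : Fin n → ℝ, euclNorm (H.mulVec y) = ‖L (toE y)‖ := by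
    intro y
    rw [enorm_eq, show L (toE y) = toE (H.mulVec y) from toEuc_apply H y]
  have hbdd : BddAbove {r : ℝ | ∃ x : Fin n → ℝ, euclNorm x = 1 ∧ r = euclNorm (H.mulVec x)} := by
    refine ⟨‖L‖, ?_⟩
    rintro r ⟨y, hy1, rfl⟩
    rw [key]
    calc ‖L (toE y)‖ ≤ ‖L‖ * ‖toE y‖ := L.le_opNorm _
      _ = ‖L‖ := by rw [← enorm_eq, hy1, mul_one]
  rcases eq_or_ne (euclNorm x) 0 with h0 | h0
  · have hx0 : toE x = 0 := by
      rw [← norm_eq_zero, ← enorm_eq]; exact h0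
    have hx0' : x = 0 := congrArg (WithLp.equiv 2 (Fin n → ℝ)) hx0
    subst hx0'
    rw [Matrix.mulVec_zero, h0, mul_zero]
  · have hxpos : 0 < euclNorm x := lt_of_le_of_ne (enorm_nonneg' x) (Ne.symm h0)
    set y : Fin n → ℝ := (euclNorm x)⁻¹ • x with hy
    have hy1 : euclNorm y = 1 := by
      rw [hy, enorm_smul', abs_of_pos (inv_pos.mpr hxpos), inv_mul_cancel₀ h0]
    have hle : euclNorm (H.mulVec y) ≤ specNorm H :=
      le_csSup hbdd ⟨y, hy1, rfl⟩
    have hmv : H.mulVec y = (euclNorm x)⁻¹ • H.mulVec x := by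
      rw [hy, Matrix.mulVec_smul]
    rw [hmv, enorm_smul', abs_of_pos (inv_pos.mpr hxpos)] at hle
    calc euclNorm (H.mulVec x) = euclNorm x * ((euclNorm x)⁻¹ * euclNorm (H.mulVec x)) := by
          field_simp
      _ ≤ euclNorm x * specNorm H := mul_le_mul_of_nonneg_left hle hxpos.le
      _ = specNorm H * euclNorm x := mul_comm _ _

lemma enorm_triangle {n : ℕ} (x y : Fin n → ℝ) : euclNorm (x + y) ≤ euclNorm x + euclNorm y := by
  rw [enorm_eq, enorm_eq, enorm_eq, toE_add]; exact norm_add_le _ _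

lemma dot_abs_le {n : ℕ} (x y : Fin n → ℝ) : |x ⬝ᵥ y| ≤ euclNorm x * euclNorm y := by
  rw [dot_eq, enorm_eq, enorm_eq]; exact abs_real_inner_le_norm _ _

lemma key_ineq (ε m N Q R D P : ℝ) (hε0 : 0 ≤ ε) (hε1 : ε ≤ 1 / 2)
    (hN : 0 ≤ N) (hm1 : 1 - ε ≤ m) (hm2 : m ≤ 1)
    (hD : D ≤ 2 * ((1 - ε) * m) + 2 * ε) (hDnn : 0 ≤ D)
    (hP : P ≤ 2 * ε) (hPnn : 0 ≤ P)
    (hQ : -(D * (N * P)) ≤ Q) (hR : -(N * (2 * ε)) ≤ R) :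
    2 * (1 - 5 * ε) * N ≤ Q + (2 * ((1 - ε) * m) * N + R) := by
  have hD2 : D ≤ 2 := by nlinarith
  have hNP : N * P ≤ N * (2 * ε) := mul_le_mul_of_nonneg_left hP hN
  have hNPnn : 0 ≤ N * P := mul_nonneg hN hPnn
  have hDNP : D * (N * P) ≤ 2 * (N * (2 * ε)) := by nlinarith
  have hmN : (1 - ε) * ((1 - ε) * N) ≤ (1 - ε) * m * N := by
    nlinarith [mul_le_mul_of_nonneg_right hm1 hN]
  nlinarith [mul_nonneg (mul_nonneg hε0 hε0) hN]

/-- Let `H` be symmetric, `‖H‖ ≤ ‖h‖`, `ε ∈ [0,1/2]`, and `l > 0`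
with `1 − ε ≤ l‖h‖ ≤ 1`. If `s ∈ B((1−ε)lh, ε)` and `t ∈ B(−(1−ε)lh, ε)`, then
`f(s) − f(t) ≥ 2(1 − 5ε)‖h‖`, where `f(x) = xᵀHx + hᵀx`. -/
theorem stmt_5 (n : ℕ) (H : Matrix (Fin n) (Fin n) ℝ) (hH : H.IsSymm) (h : Fin n → ℝ)
    (ε : ℝ) (hε0 : 0 ≤ ε) (hε1 : ε ≤ 1 / 2)
    (hHh : specNorm H ≤ euclNorm h)
    (l : ℝ) (hl : 0 < l) (hl1 : 1 - ε ≤ l * euclNorm h) (hl2 : l * euclNorm h ≤ 1)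
    (s t : Fin n → ℝ)
    (hs : s ∈ eball (((1 - ε) * l) • h) ε)
    (ht : t ∈ eball ((-((1 - ε) * l)) • h) ε) :
    (s ⬝ᵥ H.mulVec s + h ⬝ᵥ s) - (t ⬝ᵥ H.mulVec t + h ⬝ᵥ t) ≥
      2 * (1 - 5 * ε) * euclNorm h := by
  set N := euclNorm h with hN
  have hNnn : 0 ≤ N := enorm_nonneg' h
  set a : Fin n → ℝ := ((1 - ε) * l) • h with ha
  set u : Fin n → ℝ := s - a with hu'
  set v : Fin n → ℝ := t + a with hv'
  have hu : euclNorm u ≤ ε := hs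
  have hv : euclNorm v ≤ ε := by
    have : t - (-((1 - ε) * l)) • h = v := by
      rw [hv', ha, neg_smul, sub_neg_eq_add]
    have h2 := ht
    rw [eball, Set.mem_setOf_eq, this] at h2
    exact h2
  have hnegv : euclNorm (u - v) ≤ 2 * ε := by
    have h1 : euclNorm ((-1 : ℝ) • v) = euclNorm v := by
      rw [enorm_smul']; norm_num
    have h2 : u - v = u + (-1 : ℝ) • v := by
      ext i; simp [sub_eq_add_neg]
    rw [h2]
    calc euclNorm (u + (-1:ℝ) • v) ≤ euclNorm u + euclNorm ((-1:ℝ) • v) := enorm_triangle _ _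
      _ ≤ ε + ε := by rw [h1]; exact add_le_add hu hv
      _ = 2 * ε := by ring
  have hd_eq : s - t = (2:ℝ) • a + (u - v) := by
    rw [hu', hv']; ext i
    simp only [Pi.add_apply, Pi.sub_apply, Pi.smul_apply, smul_eq_mul]
    ring
  have hp_eq : s + t = u + v := by
    rw [hu', hv']; ext i
    simp only [Pi.add_apply, Pi.sub_apply]
    ring
  have hnorm_a : euclNorm a = (1 - ε) * l * N := by
    rw [ha, enorm_smul', abs_of_nonneg (by nlinarith : (0:ℝ) ≤ (1 - ε) * l)]
  have hp2 : euclNorm (s + t) ≤ 2 * ε := by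
    rw [hp_eq]
    calc euclNorm (u + v) ≤ euclNorm u + euclNorm v := enorm_triangle _ _
      _ ≤ ε + ε := add_le_add hu hv
      _ = 2 * ε := by ring
  have hd2 : euclNorm (s - t) ≤ 2 * ((1 - ε) * (l * N)) + 2 * ε := by
    rw [hd_eq]
    calc euclNorm ((2:ℝ) • a + (u - v)) ≤ euclNorm ((2:ℝ) • a) + euclNorm (u - v) :=
          enorm_triangle _ _
      _ ≤ 2 * ((1 - ε) * l * N) + 2 * ε := by
          rw [enorm_smul', hnorm_a]
          norm_num
          linarith [hnegv]
      _ = 2 * ((1 - ε) * (l * N)) + 2 * ε := by ring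
  have hNsq : h ⬝ᵥ h = N ^ 2 := by
    have h1 : h ⬝ᵥ h = ∑ i, h i ^ 2 := by simp [dotProduct, sq]
    rw [h1, hN, euclNorm, Real.sq_sqrt (by positivity)]
  have hquad : s ⬝ᵥ H.mulVec s - t ⬝ᵥ H.mulVec t = (s - t) ⬝ᵥ H.mulVec (s + t) := by
    have hcross : s ⬝ᵥ H.mulVec t = t ⬝ᵥ H.mulVec s := by
      rw [Matrix.dotProduct_mulVec, ← Matrix.mulVec_transpose,
        show H.transpose = H from hH, dotProduct_comm]
    rw [sub_dotProduct, Matrix.mulVec_add, dotProduct_add,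
      dotProduct_add, hcross]
    ring
  have hlin : h ⬝ᵥ (s - t) = 2 * ((1 - ε) * (l * N)) * N + h ⬝ᵥ (u - v) := by
    rw [hd_eq, dotProduct_add, ha]
    have : h ⬝ᵥ ((2:ℝ) • ((1 - ε) * l) • h) = 2 * ((1 - ε) * l) * (h ⬝ᵥ h) := by
      rw [dotProduct_smul, dotProduct_smul]; simp [smul_eq_mul]; ring
    rw [this, hNsq]; ring
  have hQ : |(s - t) ⬝ᵥ H.mulVec (s + t)| ≤ euclNorm (s - t) * (N * euclNorm (s + t)) := by
    calc |(s - t) ⬝ᵥ H.mulVec (s + t)| ≤ euclNorm (s - t) * euclNorm (H.mulVec (s + t)) :=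
          dot_abs_le _ _
      _ ≤ euclNorm (s - t) * (specNorm H * euclNorm (s + t)) :=
          mul_le_mul_of_nonneg_left (mulVec_enorm_le H _) (enorm_nonneg' _)
      _ ≤ euclNorm (s - t) * (N * euclNorm (s + t)) := by
          apply mul_le_mul_of_nonneg_left _ (enorm_nonneg' _)
          exact mul_le_mul_of_nonneg_right hHh (enorm_nonneg' _)
  have hR : |h ⬝ᵥ (u - v)| ≤ N * (2 * ε) :=
    le_trans (dot_abs_le _ _) (mul_le_mul_of_nonneg_left hnegv hNnn)
  have hgoal : (s ⬝ᵥ H.mulVec s + h ⬝ᵥ s) - (t ⬝ᵥ H.mulVec t + h ⬝ᵥ t)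
      = (s - t) ⬝ᵥ H.mulVec (s + t) + (2 * ((1 - ε) * (l * N)) * N + h ⬝ᵥ (u - v)) := by
    rw [← hquad, ← hlin, dotProduct_sub]
    ring
  rw [ge_iff_le, hgoal]
  set Q := (s - t) ⬝ᵥ H.mulVec (s + t) with hQdef
  set R := h ⬝ᵥ (u - v) with hRdef
  set D := euclNorm (s - t) with hDdef
  set P := euclNorm (s + t) with hPdef
  have hDnn : 0 ≤ D := enorm_nonneg' _
  have hPnn : 0 ≤ P := enorm_nonneg' _
  have hQ1 : -(D * (N * P)) ≤ Q := by
    have := neg_abs_le Q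
    linarith [hQ]
  have hR1 : -(N * (2 * ε)) ≤ R := by
    have := neg_abs_le R
    linarith [hR]
  exact key_ineq ε (l * N) N Q R D P hε0 hε1 hNnn hl1 hl2 hd2 hDnn hp2 hPnn hQ1 hR1
end

section
/- Let H(d, β) ⊂ ℝⁿ be a rational hyperplane with d_{p+1} = ⋯ = d_n = 0, for some p ∈ {1,…,n}, and suppose the set S := H(d, β) ∩ (ℤᵖ × ℝ^{n−p}) is nonempty. Then there exist a vector x̄ ∈ ℤⁿ and a unimodular matrix T ∈ ℤ^{n×n} such that, with η(y) := x̄ + Ty, one has H(d, β) = η({y ∈ ℝⁿ : y₁ = 0}) and ℤᵖ × ℝ^{n−p} = η(ℤᵖ × ℝ^{n−p}). -/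
open Matrix

lemma key (p : ℕ) (hp : 0 < p) (c : Fin p → ℤ) (hc : c ≠ 0) :
    ∃ A B : Matrix (Fin p) (Fin p) ℤ, A * B = 1 ∧ B * A = 1 ∧
      ∀ j : Fin p, (j : ℕ) ≠ 0 → (c ᵥ* A) j = 0 := by
  classical
  -- the linear functional x ↦ c ⬝ᵥ x
  let f : (Fin p → ℤ) →ₗ[ℤ] ℤ := ∑ i, c i • LinearMap.proj i
  have hf : ∀ x, f x = c ⬝ᵥ x := by
    intro x
    simp [f, dotProduct, LinearMap.sum_apply]
  have hfne : f ≠ 0 := by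
    obtain ⟨i, hi⟩ := Function.ne_iff.mp hc
    intro h
    apply hi
    have h2 : f (Pi.single i 1) = c i := by
      rw [hf]
      simp [dotProduct, Pi.single_apply]
    rw [h] at h2
    simpa using h2.symm
  -- the range of f is a principal ideal with nonzero generator g
  obtain ⟨g, hg⟩ : (LinearMap.range f).IsPrincipal := inferInstance
  have hgmem : g ∈ LinearMap.range f := by
    rw [hg]; exact Submodule.mem_span_singleton_self g
  obtain ⟨u, hu⟩ := hgmem
  have hgne : g ≠ 0 := by
    intro h
    apply hfne
    refine LinearMap.ext fun x => ?_
    have h4 : f x ∈ LinearMap.range f := LinearMap.mem_range_self f x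
    rw [hg, h] at h4
    rw [Submodule.span_zero_singleton] at h4
    simpa using h4
  -- a basis of the kernel
  obtain ⟨m, bN⟩ := Submodule.basisOfPid (Pi.basisFun ℤ (Fin p)) (LinearMap.ker f)
  have hli : ∀ (a : ℤ), ∀ x ∈ LinearMap.ker f, a • u + x = 0 → a = 0 := by
    intro a x hx h
    have h3 := congrArg f h
    rw [map_add, f.map_smul, hu, LinearMap.mem_ker.mp hx] at h3
    simpa [hgne] using h3
  have hsp : ∀ z : (Fin p → ℤ), ∃ a : ℤ, z + a • u ∈ LinearMap.ker f := by
    intro z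
    have : f z ∈ LinearMap.range f := LinearMap.mem_range_self f z
    rw [hg, Submodule.mem_span_singleton] at this
    obtain ⟨k, hk⟩ := this
    refine ⟨-k, ?_⟩
    rw [LinearMap.mem_ker, map_add, f.map_smul, hu, ← hk]
    ring_nf
  let b0 : Module.Basis (Fin (m + 1)) ℤ (Fin p → ℤ) := Module.Basis.mkFinCons u bN hli hsp
  have hmp : m + 1 = p := by
    have h1 : Module.finrank ℤ (Fin p → ℤ) = m + 1 := Module.finrank_eq_card_basis b0 |>.trans (by simp)
    have h2 : Module.finrank ℤ (Fin p → ℤ) = p := by simp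
    omega
  let b : Module.Basis (Fin p) ℤ (Fin p → ℤ) := b0.reindex (finCongr hmp)
  have hbker : ∀ j : Fin p, (j : ℕ) ≠ 0 → b j ∈ LinearMap.ker f := by
    intro j hj
    have : b j = b0 (finCongr hmp.symm j) := by simp [b]
    rw [this]
    have hj0 : finCongr hmp.symm j ≠ 0 := by
      simp [Fin.ext_iff, hj]
    obtain ⟨i, hi⟩ := Fin.eq_succ_of_ne_zero hj0
    rw [hi, show (b0 : Fin (m+1) → (Fin p → ℤ)) = Fin.cons u ((↑) ∘ bN) from Module.Basis.coe_mkFinCons ..]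
    simp
  let e := Pi.basisFun ℤ (Fin p)
  refine ⟨e.toMatrix b, b.toMatrix e, Module.Basis.toMatrix_mul_toMatrix_flip e b,
    Module.Basis.toMatrix_mul_toMatrix_flip b e, ?_⟩
  intro j hj
  have : (c ᵥ* e.toMatrix b) j = f (b j) := by
    rw [hf, dotProduct, vecMul]
    simp [dotProduct, Module.Basis.toMatrix_apply, e]
  rw [this, LinearMap.mem_ker.mp (hbker j hj)]

lemma sum_split {M : Type*} [AddCommMonoid M] {n p : ℕ} (h : p ≤ n) (f : Fin n → M)
    (hf : ∀ j : Fin n, p ≤ (j : ℕ) → f j = 0) :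
    ∑ j, f j = ∑ j : Fin p, f (Fin.castLE h j) := by
  classical
  set g : ℕ → M := fun k => if hk : k < n then f ⟨k, hk⟩ else 0 with hg
  have h1 : ∑ j : Fin n, f j = ∑ j ∈ Finset.range n, g j := by
    rw [← Fin.sum_univ_eq_sum_range]
    exact Finset.sum_congr rfl (by intro j _; simp [hg])
  have h2 : ∑ j ∈ Finset.range p, g j = ∑ j ∈ Finset.range n, g j := by
    refine Finset.sum_subset (Finset.range_subset_range.mpr h) ?_
    intro x hx hnx
    simp only [Finset.mem_range] at hx hnx
    have hpx : p ≤ x := by omega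
    simp only [hg]
    rw [dif_pos hx]
    exact hf ⟨x, hx⟩ hpx
  have h3 : ∑ j ∈ Finset.range p, g j = ∑ j : Fin p, f (Fin.castLE h j) := by
    rw [← Fin.sum_univ_eq_sum_range]
    refine Finset.sum_congr rfl ?_
    intro j _
    simp only [hg]
    rw [dif_pos (lt_of_lt_of_le j.isLt h)]
    rfl
  rw [h1, ← h2, h3]

/-- embed a `p × p` integer matrix as an `n × n` one, identity elsewhere -/
def padMat (n p : ℕ) (A : Matrix (Fin p) (Fin p) ℤ) : Matrix (Fin n) (Fin n) ℤ :=
  Matrix.of fun i j =>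
    if hi : (i : ℕ) < p then (if hj : (j : ℕ) < p then A ⟨i, hi⟩ ⟨j, hj⟩ else 0)
    else (if i = j then 1 else 0)

lemma padMat_block {n p : ℕ} (A : Matrix (Fin p) (Fin p) ℤ) {i j : Fin n}
    (hi : (i : ℕ) < p) (hj : p ≤ (j : ℕ)) : padMat n p A i j = 0 := by
  simp [padMat, hi, not_lt.mpr hj]

lemma padMat_low {n p : ℕ} (A : Matrix (Fin p) (Fin p) ℤ) {i j : Fin n}
    (hi : ¬ (i : ℕ) < p) : padMat n p A i j = if i = j then 1 else 0 := by
  simp [padMat, hi]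

lemma padMat_in {n p : ℕ} (A : Matrix (Fin p) (Fin p) ℤ) {i j : Fin n}
    (hi : (i : ℕ) < p) (hj : (j : ℕ) < p) : padMat n p A i j = A ⟨i, hi⟩ ⟨j, hj⟩ := by
  simp [padMat, hi, hj]

lemma padMat_mul {n p : ℕ} (hpn : p ≤ n) (A B : Matrix (Fin p) (Fin p) ℤ)
    (h : A * B = 1) : padMat n p A * padMat n p B = 1 := by
  ext i k
  rw [Matrix.mul_apply, Matrix.one_apply]
  by_cases hi : (i : ℕ) < p
  · have hs : ∑ j, padMat n p A i j * padMat n p B j k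
        = ∑ j : Fin p, padMat n p A i (Fin.castLE hpn j) * padMat n p B (Fin.castLE hpn j) k := by
      refine sum_split hpn _ ?_
      intro j hj
      rw [padMat_block A hi hj, zero_mul]
    rw [hs]
    by_cases hk : (k : ℕ) < p
    · have : ∀ j : Fin p, padMat n p A i (Fin.castLE hpn j) * padMat n p B (Fin.castLE hpn j) k
          = A ⟨i, hi⟩ j * B j ⟨k, hk⟩ := by
        intro j
        have hj' : ((Fin.castLE hpn j : Fin n) : ℕ) < p := by simpa using j.isLt
        have hje : (⟨((Fin.castLE hpn j : Fin n) : ℕ), hj'⟩ : Fin p) = j := by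
          simp [Fin.ext_iff]
        rw [padMat_in A hi hj', padMat_in B hj' hk, hje]
      rw [Finset.sum_congr rfl fun j _ => this j, ← Matrix.mul_apply, h, Matrix.one_apply]
      by_cases hik : i = k
      · simp [hik]
      · have : (⟨(i : ℕ), hi⟩ : Fin p) ≠ ⟨(k : ℕ), hk⟩ := by
          simp only [ne_eq, Fin.mk.injEq]
          exact fun hc => hik (Fin.ext hc)
        simp [hik, this]
    · have hik : i ≠ k := fun hc => hk (hc ▸ hi)
      have : ∀ j : Fin p, padMat n p A i (Fin.castLE hpn j) * padMat n p B (Fin.castLE hpn j) k = 0 := by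
        intro j
        have hj' : ((Fin.castLE hpn j : Fin n) : ℕ) < p := by simpa using j.isLt
        rw [padMat_block B hj' (not_lt.mp hk), mul_zero]
      rw [Finset.sum_congr rfl fun j _ => this j]
      simp [hik]
  · rw [Finset.sum_eq_single i]
    · rw [padMat_low A hi, if_pos rfl, one_mul, padMat_low B hi]
    · intro j _ hj
      rw [padMat_low A hi, if_neg (Ne.symm hj), zero_mul]
    · intro hii
      exact absurd (Finset.mem_univ i) hii

/-- The set `ℤᵖ × ℝ^{n−p}` of points of `ℝⁿ` whose first `p` coordinates are integers. -/
def mixedIntSet (n p : ℕ) : Set (Fin n → ℝ) :=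
  {x | ∀ i : Fin n, (i : ℕ) < p → ∃ z : ℤ, x i = (z : ℝ)}

lemma pad_mulVec_mem {n p : ℕ} (M : Matrix (Fin n) (Fin n) ℤ)
    (hM : ∀ i j : Fin n, (i : ℕ) < p → p ≤ (j : ℕ) → M i j = 0)
    (v : Fin n → ℝ) (hv : v ∈ mixedIntSet n p) :
    (M.map ((↑) : ℤ → ℝ)) *ᵥ v ∈ mixedIntSet n p := by
  classical
  intro i hi
  choose z hz using hv
  refine ⟨∑ j, M i j * (if hj : (j : ℕ) < p then z j hj else 0), ?_⟩
  rw [mulVec, dotProduct]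
  push_cast
  refine Finset.sum_congr rfl fun j _ => ?_
  by_cases hj : (j : ℕ) < p
  · rw [dif_pos hj, hz j hj, Matrix.map_apply]
  · rw [dif_neg hj, hM i j hi (le_of_not_gt hj), Matrix.map_apply,
      hM i j hi (le_of_not_gt hj)]
    simp

lemma intvec_add_mem {n p : ℕ} (w : Fin n → ℤ) {v : Fin n → ℝ}
    (hv : v ∈ mixedIntSet n p) :
    (fun i => ((w i : ℤ) : ℝ)) + v ∈ mixedIntSet n p := by
  intro i hi
  obtain ⟨z, hz⟩ := hv i hi
  exact ⟨w i + z, by push_cast; simp [hz]⟩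


/-- Let `H(d,β)` be a rational hyperplane with
`d_{p+1} = ⋯ = d_n = 0` for some `p ∈ {1,…,n}`, and suppose
`S = H(d,β) ∩ (ℤᵖ × ℝ^{n−p})` is nonempty. Then there are `x̄ ∈ ℤⁿ` and a unimodular
`T ∈ ℤ^{n×n}` such that, with `η(y) = x̄ + Ty`, one has
`H(d,β) = η({y : y₁ = 0})` and `ℤᵖ × ℝ^{n−p} = η(ℤᵖ × ℝ^{n−p})`. -/
theorem stmt_12 (n p : ℕ) (hp1 : 1 ≤ p) (hpn : p ≤ n)
    (d : Fin n → ℚ) (hd : d ≠ 0) (β : ℚ)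
    (hdz : ∀ i : Fin n, p ≤ (i : ℕ) → d i = 0)
    (hS : ({x : Fin n → ℝ | (fun i => (d i : ℝ)) ⬝ᵥ x = (β : ℝ)} ∩
        mixedIntSet n p).Nonempty) :
    ∃ (xbar : Fin n → ℤ) (T : Matrix (Fin n) (Fin n) ℤ),
      (T.det = 1 ∨ T.det = -1) ∧
      {x : Fin n → ℝ | (fun i => (d i : ℝ)) ⬝ᵥ x = (β : ℝ)} =
        (fun y : Fin n → ℝ =>
            (fun i => ((xbar i : ℤ) : ℝ)) + (T.map ((↑) : ℤ → ℝ)).mulVec y) ''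
          {y : Fin n → ℝ | y ⟨0, by omega⟩ = 0} ∧
      mixedIntSet n p =
        (fun y : Fin n → ℝ =>
            (fun i => ((xbar i : ℤ) : ℝ)) + (T.map ((↑) : ℤ → ℝ)).mulVec y) ''
          mixedIntSet n p := by
  classical
  obtain ⟨x₀, hx₀H, hx₀M⟩ := hS
  simp only [Set.mem_setOf_eq] at hx₀H
  choose zx hzx using hx₀M
  set j0 : Fin n := ⟨0, by omega⟩ with hj0
  -- the integer point xbar
  set xbar : Fin n → ℤ := fun i => if h : (i : ℕ) < p then zx i h else 0 with hxbar
  -- clear the denominators of d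
  set m : ℤ := ∏ j, ((d j).den : ℤ) with hm
  have hm0 : m ≠ 0 := by
    rw [hm]
    refine Finset.prod_ne_zero_iff.mpr ?_
    intro j _
    exact_mod_cast (d j).den_nz
  set c : Fin n → ℤ := fun i => (d i).num * (m / ((d i).den : ℤ)) with hc
  have hcast : ∀ i, (c i : ℚ) = (m : ℚ) * d i := by
    intro i
    have hdvd : ((d i).den : ℤ) ∣ m := Finset.dvd_prod_of_mem _ (Finset.mem_univ i)
    have hden : ((d i).den : ℤ) ≠ 0 := by exact_mod_cast (d i).den_nz
    obtain ⟨k, hk⟩ := hdvd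
    have h5 : (d i) * ((d i).den : ℚ) = (d i).num := Rat.mul_den_eq_num _
    rw [hc]
    simp only
    rw [hk, Int.mul_ediv_cancel_left _ hden]
    push_cast
    linear_combination (-(k : ℚ)) * h5
  have hcR : ∀ i, ((c i : ℤ) : ℝ) = (m : ℝ) * ((d i : ℚ) : ℝ) := by
    intro i
    exact_mod_cast hcast i
  have hc0 : ∀ i, c i = 0 ↔ d i = 0 := by
    intro i
    constructor
    · intro h
      have := hcast i
      rw [h] at this
      have hmq : (m : ℚ) ≠ 0 := by exact_mod_cast hm0
      field_simp at this
      exact (mul_eq_zero.mp (by exact_mod_cast this.symm)).resolve_left hmq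
    · intro h
      have := hcast i
      rw [h, mul_zero] at this
      exact_mod_cast this
  have hcz : ∀ i : Fin n, p ≤ (i : ℕ) → c i = 0 := fun i hi => (hc0 i).mpr (hdz i hi)
  have hcne : c ≠ 0 := by
    intro h
    apply hd
    funext i
    have := congrFun h i
    exact (hc0 i).mp this
  set cR : Fin n → ℝ := fun i => ((c i : ℤ) : ℝ) with hcRdef
  have hcmd : ∀ x : Fin n → ℝ, cR ⬝ᵥ x = (m : ℝ) * ((fun i => ((d i : ℚ) : ℝ)) ⬝ᵥ x) := by
    intro x
    rw [dotProduct, dotProduct, Finset.mul_sum]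
    refine Finset.sum_congr rfl fun i _ => ?_
    rw [hcRdef]
    simp only
    rw [hcR i]
    ring
  set b : ℤ := ∑ i, c i * xbar i with hb
  have hbxbar : cR ⬝ᵥ (fun i => ((xbar i : ℤ) : ℝ)) = (b : ℝ) := by
    rw [dotProduct, hb]
    push_cast
    rfl
  have hbx0 : cR ⬝ᵥ x₀ = (b : ℝ) := by
    rw [← hbxbar, dotProduct, dotProduct]
    refine Finset.sum_congr rfl fun i _ => ?_
    by_cases h : (i : ℕ) < p
    · rw [hzx i h, hxbar]
      simp [dif_pos h]
    · have : c i = 0 := hcz i (le_of_not_gt h)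
      rw [hcRdef]
      simp [this]
  have hbmβ : (b : ℝ) = (m : ℝ) * (β : ℝ) := by
    rw [← hbx0, hcmd, hx₀H]
  have hmR : (m : ℝ) ≠ 0 := by exact_mod_cast hm0
  have hH : ∀ x : Fin n → ℝ,
      ((fun i => ((d i : ℚ) : ℝ)) ⬝ᵥ x = (β : ℝ)) ↔ cR ⬝ᵥ x = (b : ℝ) := by
    intro x
    rw [hcmd, hbmβ]
    constructor
    · intro h; rw [h]
    · intro h; exact mul_left_cancel₀ hmR h
  -- the unimodular matrix
  set c' : Fin p → ℤ := fun i => c (Fin.castLE hpn i) with hc'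
  have hc'ne : c' ≠ 0 := by
    intro h
    apply hcne
    funext i
    by_cases hi : (i : ℕ) < p
    · have := congrFun h ⟨(i : ℕ), hi⟩
      simpa [hc'] using this
    · exact hcz i (le_of_not_gt hi)
  obtain ⟨A, B, hAB, hBA, hA0⟩ := key p hp1 c' hc'ne
  set T : Matrix (Fin n) (Fin n) ℤ := padMat n p A with hT
  set Ti : Matrix (Fin n) (Fin n) ℤ := padMat n p B with hTi
  have hTTi : T * Ti = 1 := padMat_mul hpn A B hAB
  have hTiT : Ti * T = 1 := padMat_mul hpn B A hBA
  -- vecMul of c with T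
  have hvT0 : ∀ j : Fin n, (j : ℕ) ≠ 0 → (c ᵥ* T) j = 0 := by
    intro j hj
    rw [vecMul, dotProduct]
    by_cases hjp : (j : ℕ) < p
    · have hse : ∑ i, c i * T i j
          = ∑ i : Fin p, c (Fin.castLE hpn i) * T (Fin.castLE hpn i) j := by
        refine sum_split hpn _ ?_
        intro i hi
        rw [hcz i hi, zero_mul]
      rw [hse]
      have : ∀ i : Fin p, c (Fin.castLE hpn i) * T (Fin.castLE hpn i) j
          = c' i * A i ⟨(j : ℕ), hjp⟩ := by
        intro i
        have hi' : ((Fin.castLE hpn i : Fin n) : ℕ) < p := by simpa using i.isLt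
        rw [hT, padMat_in A hi' hjp, hc']
        congr 1
      rw [Finset.sum_congr rfl fun i _ => this i]
      exact hA0 ⟨(j : ℕ), hjp⟩ hj
    · rw [Finset.sum_eq_single j]
      · rw [hcz j (le_of_not_gt hjp), zero_mul]
      · intro i _ hij
        by_cases hi : (i : ℕ) < p
        · rw [hT, padMat_block A hi (le_of_not_gt hjp), mul_zero]
        · rw [hT, padMat_low A hi, if_neg hij, mul_zero]
      · intro h; exact absurd (Finset.mem_univ j) h
  set lam : ℤ := (c ᵥ* T) j0 with hlam
  have hlamne : lam ≠ 0 := by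
    intro h
    apply hcne
    have hzero : c ᵥ* T = 0 := by
      funext j
      by_cases hj : (j : ℕ) = 0
      · have : j = j0 := Fin.ext (by simp [hj0, hj])
        rw [this, ← hlam, h]
        rfl
      · rw [hvT0 j hj]
        rfl
    calc c = c ᵥ* (T * Ti) := by rw [hTTi, vecMul_one]
    _ = (c ᵥ* T) ᵥ* Ti := by rw [vecMul_vecMul]
    _ = 0 := by rw [hzero]; funext j; simp [vecMul]
  -- real versions
  set Tr : Matrix (Fin n) (Fin n) ℝ := T.map ((↑) : ℤ → ℝ) with hTr
  set Tir : Matrix (Fin n) (Fin n) ℝ := Ti.map ((↑) : ℤ → ℝ) with hTir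
  have hTrTir : Tr * Tir = 1 := by
    rw [hTr, hTir]
    have : (T * Ti).map ((Int.castRingHom ℝ) : ℤ → ℝ)
        = T.map (Int.castRingHom ℝ) * Ti.map (Int.castRingHom ℝ) :=
      Matrix.map_mul
    rw [hTTi] at this
    calc T.map ((↑) : ℤ → ℝ) * Ti.map ((↑) : ℤ → ℝ)
        = T.map (Int.castRingHom ℝ) * Ti.map (Int.castRingHom ℝ) := rfl
    _ = (1 : Matrix (Fin n) (Fin n) ℤ).map (Int.castRingHom ℝ) := this.symm
    _ = 1 := by
        ext i j
        simp [Matrix.map_apply, Matrix.one_apply]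
  have hvTr : ∀ j, (cR ᵥ* Tr) j = (((c ᵥ* T) j : ℤ) : ℝ) := by
    intro j
    rw [vecMul, dotProduct, vecMul, dotProduct]
    push_cast
    refine Finset.sum_congr rfl fun i _ => ?_
    rw [hcRdef, hTr]
    simp [Matrix.map_apply]
  have hdotT : ∀ y : Fin n → ℝ, cR ⬝ᵥ (Tr *ᵥ y) = (lam : ℝ) * y j0 := by
    intro y
    rw [dotProduct_mulVec, dotProduct]
    rw [Finset.sum_eq_single j0]
    · rw [hvTr j0, ← hlam]
    · intro j _ hj
      have : (j : ℕ) ≠ 0 := by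
        intro h
        exact hj (Fin.ext (by simp [hj0, h]))
      rw [hvTr j, hvT0 j this]
      simp
    · intro h; exact absurd (Finset.mem_univ j0) h
  have hinv : ∀ x : Fin n → ℝ, Tr *ᵥ (Tir *ᵥ x) = x := by
    intro x
    rw [mulVec_mulVec, hTrTir, one_mulVec]
  refine ⟨xbar, T, ?_, ?_, ?_⟩
  · have : T.det * Ti.det = 1 := by rw [← det_mul, hTTi, det_one]
    exact Int.isUnit_iff.mp (IsUnit.of_mul_eq_one _ this)
  · -- hyperplane equality
    ext x
    simp only [Set.mem_setOf_eq, Set.mem_image]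
    rw [hH x]
    constructor
    · intro hx
      refine ⟨Tir *ᵥ (x - fun i => ((xbar i : ℤ) : ℝ)), ?_, ?_⟩
      · show (Tir *ᵥ (x - fun i => ((xbar i : ℤ) : ℝ))) ⟨0, by omega⟩ = 0
        have h1 : cR ⬝ᵥ (Tr *ᵥ (Tir *ᵥ (x - fun i => ((xbar i : ℤ) : ℝ))))
            = (lam : ℝ) * (Tir *ᵥ (x - fun i => ((xbar i : ℤ) : ℝ))) j0 := hdotT _
        rw [hinv] at h1
        rw [dotProduct_sub, hx, hbxbar, sub_self] at h1
        have := (mul_eq_zero.mp h1.symm).resolve_left (by exact_mod_cast hlamne)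
        exact this
      · show (fun i => ((xbar i : ℤ) : ℝ)) + Tr *ᵥ (Tir *ᵥ (x - fun i => ((xbar i : ℤ) : ℝ))) = x
        rw [hinv]
        abel
    · rintro ⟨y, hy0, rfl⟩
      show cR ⬝ᵥ ((fun i => ((xbar i : ℤ) : ℝ)) + Tr *ᵥ y) = (b : ℝ)
      rw [dotProduct_add, hbxbar, hdotT]
      have : y j0 = 0 := hy0
      rw [this, mul_zero, add_zero]
  · -- mixed integer set equality
    ext x
    simp only [Set.mem_image]
    constructor
    · intro hx
      refine ⟨Tir *ᵥ (x - fun i => ((xbar i : ℤ) : ℝ)), ?_, ?_⟩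
      · refine pad_mulVec_mem Ti (fun i j hi hj => padMat_block B hi hj) _ ?_
        have : x - (fun i => ((xbar i : ℤ) : ℝ))
            = (fun i => (((-xbar) i : ℤ) : ℝ)) + x := by
          funext i
          simp only [Pi.sub_apply, Pi.add_apply, Pi.neg_apply]
          push_cast
          ring
        rw [this]
        exact intvec_add_mem (-xbar) hx
      · show (fun i => ((xbar i : ℤ) : ℝ)) + Tr *ᵥ (Tir *ᵥ (x - fun i => ((xbar i : ℤ) : ℝ))) = x
        rw [hinv]
        abel
    · rintro ⟨y, hy, rfl⟩
      exact intvec_add_mem xbar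
        (pad_mulVec_mem T (fun i j hi hj => padMat_block A hi hj) y hy)
end

section
/- Let n ≥ 2, let E(c, Q) ⊂ ℝⁿ be a rational ellipsoid, and let H(d, β) ⊂ ℝⁿ be a rational hyperplane with d_{p+1} = ⋯ = d_n = 0, for some p ∈ {1,…,n}. Suppose S := H(d, β) ∩ (ℤᵖ × ℝ^{n−p}) is nonempty. Then there exist x̄ ∈ ℤⁿ and a full-rank matrix T ∈ ℚ^{n×(n−1)} such that, with η(y) := x̄ + Ty, one has H(d, β) = η(ℝ^{n−1}) and S = η(ℤ^{p−1} × ℝ^{n−p}); moreover, if in addition E(c, Q) ∩ H(d, β) is nonempty, then the preimage of E(c, Q) ∩ H(d, β) under η is either a rational ellipsoid E(c′, Q′) ⊂ ℝ^{n−1} or a singleton {c′} for some c′ ∈ ℚ^{n−1}. -/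
open Matrix

namespace Stmt13Helper

/-- cast a rational vector to a real vector -/
def qr {k : ℕ} (x : Fin k → ℚ) : Fin k → ℝ := fun i => (x i : ℝ)

lemma qr_mulVec {k l : ℕ} (A : Matrix (Fin k) (Fin l) ℚ) (x : Fin l → ℚ) :
    (A.map ((↑) : ℚ → ℝ)).mulVec (qr x) = qr (A.mulVec x) := by
  ext i
  simp only [Matrix.mulVec, dotProduct, qr, Matrix.map_apply]
  push_cast
  rfl

lemma qr_dot {k : ℕ} (x y : Fin k → ℚ) : qr x ⬝ᵥ qr y = ((x ⬝ᵥ y : ℚ) : ℝ) := by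
  simp only [dotProduct, qr]
  push_cast
  rfl

lemma real_inj_of_rat_inj {k l : ℕ} (A : Matrix (Fin k) (Fin l) ℚ)
    (h : ∀ x : Fin l → ℚ, A.mulVec x = 0 → x = 0) :
    ∀ x : Fin l → ℝ, (A.map ((↑) : ℚ → ℝ)).mulVec x = 0 → x = 0 := by
  have hmapT : (A.map ((↑) : ℚ → ℝ))ᵀ = Aᵀ.map ((↑) : ℚ → ℝ) := (Matrix.transpose_map).symm
  set G : Matrix (Fin l) (Fin l) ℚ := Aᵀ * A with hG
  have hdet : G.det ≠ 0 := by
    intro h0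
    obtain ⟨v, hv, hGv⟩ := (Matrix.exists_mulVec_eq_zero_iff).2 h0
    have key : (A.mulVec v) ⬝ᵥ (A.mulVec v) = 0 := by
      have h1 : v ⬝ᵥ (G.mulVec v) = 0 := by rw [hGv]; simp
      rwa [hG, ← Matrix.mulVec_mulVec, Matrix.dotProduct_mulVec, ← Matrix.transpose_transpose A,
        Matrix.vecMul_transpose, Matrix.transpose_transpose] at h1
    exact hv (h v (dotProduct_self_eq_zero.mp key))
  intro x hx
  have hGR : ((G.map ((↑) : ℚ → ℝ)).mulVec x) = 0 := by
    have : G.map ((↑) : ℚ → ℝ) = (A.map ((↑) : ℚ → ℝ))ᵀ * (A.map ((↑) : ℚ → ℝ)) := by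
      ext i j
      simp only [Matrix.map_apply, Matrix.mul_apply, Matrix.transpose_apply, hG]
      push_cast
      rfl
    rw [this, ← Matrix.mulVec_mulVec, hx, Matrix.mulVec_zero]
  have hdetR : (G.map ((↑) : ℚ → ℝ)).det ≠ 0 := by
    have : (G.map ((↑) : ℚ → ℝ)).det = ((G.det : ℚ) : ℝ) := by
      have h2 := RingHom.map_det (Rat.castHom ℝ) G
      rw [RingHom.mapMatrix_apply] at h2
      exact h2.symm
    rw [this]
    exact_mod_cast hdet
  by_contra hx0
  exact hdetR ((Matrix.exists_mulVec_eq_zero_iff).1 ⟨x, hx0, hGR⟩)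

lemma quad_expand {k : ℕ} (M : Matrix (Fin k) (Fin k) ℝ) (hM : Mᵀ = M) (u z : Fin k → ℝ) :
    (u + z) ⬝ᵥ M.mulVec (u + z) =
      u ⬝ᵥ M.mulVec u + 2 * (z ⬝ᵥ M.mulVec u) + z ⬝ᵥ M.mulVec z := by
  have hsym : u ⬝ᵥ M.mulVec z = z ⬝ᵥ M.mulVec u := by
    rw [Matrix.dotProduct_mulVec, ← hM, Matrix.vecMul_transpose, hM, dotProduct_comm]
  rw [Matrix.mulVec_add, dotProduct_add, add_dotProduct, add_dotProduct,
    hsym]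
  ring

lemma dot_mulVec_comm {k l : ℕ} (B : Matrix (Fin k) (Fin l) ℝ) (y : Fin l → ℝ) (z : Fin k → ℝ) :
    (B.mulVec y) ⬝ᵥ z = y ⬝ᵥ (Bᵀ.mulVec z) := by
  rw [dotProduct_comm, Matrix.dotProduct_mulVec, ← Matrix.transpose_transpose B,
    Matrix.vecMul_transpose, Matrix.transpose_transpose, dotProduct_comm]

end Stmt13Helper

open Stmt13Helper

open Matrix

set_option maxHeartbeats 2000000 in
/-- Let `n ≥ 2`, `E(c,Q)` a rational ellipsoid, `H(d,β)` a rational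
hyperplane with `d_{p+1} = ⋯ = d_n = 0` for some `p ∈ {1,…,n}`, and suppose
`S = H(d,β) ∩ (ℤᵖ × ℝ^{n−p})` is nonempty. Then there are `x̄ ∈ ℤⁿ` and a full-rank
`T ∈ ℚ^{n×(n−1)}` such that, with `η(y) = x̄ + Ty`, one has `H(d,β) = η(ℝ^{n−1})` and
`S = η(ℤ^{p−1} × ℝ^{n−p})`; moreover, if `E(c,Q) ∩ H(d,β) ≠ ∅`, then the preimage of
`E(c,Q) ∩ H(d,β)` under `η` is either a rational ellipsoid in `ℝ^{n−1}` or a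
singleton `{c′}` with `c′ ∈ ℚ^{n−1}`. -/
theorem stmt_13 (n p : ℕ) (hn : 2 ≤ n) (hp1 : 1 ≤ p) (hpn : p ≤ n)
    (c : Fin n → ℚ) (Q : Matrix (Fin n) (Fin n) ℚ)
    (hQ : (Q.map ((↑) : ℚ → ℝ)).PosDef)
    (d : Fin n → ℚ) (hd : d ≠ 0) (β : ℚ)
    (hdz : ∀ i : Fin n, p ≤ (i : ℕ) → d i = 0)
    (hS : ({x : Fin n → ℝ | (fun i => (d i : ℝ)) ⬝ᵥ x = (β : ℝ)} ∩
        mixedIntSet n p).Nonempty) :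
    ∃ (xbar : Fin n → ℤ) (T : Matrix (Fin n) (Fin (n - 1)) ℚ),
      T.rank = n - 1 ∧
      {x : Fin n → ℝ | (fun i => (d i : ℝ)) ⬝ᵥ x = (β : ℝ)} =
        (fun y : Fin (n - 1) → ℝ =>
            (fun i => ((xbar i : ℤ) : ℝ)) + (T.map ((↑) : ℚ → ℝ)).mulVec y) ''
          Set.univ ∧
      ({x : Fin n → ℝ | (fun i => (d i : ℝ)) ⬝ᵥ x = (β : ℝ)} ∩ mixedIntSet n p) =
        (fun y : Fin (n - 1) → ℝ =>
            (fun i => ((xbar i : ℤ) : ℝ)) + (T.map ((↑) : ℚ → ℝ)).mulVec y) ''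
          mixedIntSet (n - 1) (p - 1) ∧
      (({x : Fin n → ℝ |
            (x - fun i => (c i : ℝ)) ⬝ᵥ
              (Q.map ((↑) : ℚ → ℝ)).mulVec (x - fun i => (c i : ℝ)) ≤ 1} ∩
          {x : Fin n → ℝ | (fun i => (d i : ℝ)) ⬝ᵥ x = (β : ℝ)}).Nonempty →
        ∃ c' : Fin (n - 1) → ℚ,
          (∃ Q' : Matrix (Fin (n - 1)) (Fin (n - 1)) ℚ,
            (Q'.map ((↑) : ℚ → ℝ)).PosDef ∧
            (fun y : Fin (n - 1) → ℝ =>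
                (fun i => ((xbar i : ℤ) : ℝ)) + (T.map ((↑) : ℚ → ℝ)).mulVec y) ⁻¹'
              ({x : Fin n → ℝ |
                  (x - fun i => (c i : ℝ)) ⬝ᵥ
                    (Q.map ((↑) : ℚ → ℝ)).mulVec (x - fun i => (c i : ℝ)) ≤ 1} ∩
                {x : Fin n → ℝ | (fun i => (d i : ℝ)) ⬝ᵥ x = (β : ℝ)}) =
              {y : Fin (n - 1) → ℝ |
                (y - fun i => (c' i : ℝ)) ⬝ᵥ
                  (Q'.map ((↑) : ℚ → ℝ)).mulVec (y - fun i => (c' i : ℝ)) ≤ 1}) ∨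
          (fun y : Fin (n - 1) → ℝ =>
              (fun i => ((xbar i : ℤ) : ℝ)) + (T.map ((↑) : ℚ → ℝ)).mulVec y) ⁻¹'
            ({x : Fin n → ℝ |
                (x - fun i => (c i : ℝ)) ⬝ᵥ
                  (Q.map ((↑) : ℚ → ℝ)).mulVec (x - fun i => (c i : ℝ)) ≤ 1} ∩
              {x : Fin n → ℝ | (fun i => (d i : ℝ)) ⬝ᵥ x = (β : ℝ)}) =
            {fun i => (c' i : ℝ)}) := by
  classical
  obtain ⟨s, hsH, hsM⟩ := hS
  -- scale d to an integer vector a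
  set N : ℕ := ∏ i, (d i).den with hN
  have hNpos : 0 < N := Finset.prod_pos (fun i _ => (d i).pos)
  have hNQ : (N : ℚ) ≠ 0 := Nat.cast_ne_zero.2 hNpos.ne'
  have hNden : ∀ i, ((d i).den : ℤ) ∣ (N : ℤ) := fun i =>
    Int.natCast_dvd_natCast.2 (Finset.dvd_prod_of_mem _ (Finset.mem_univ i))
  choose k hk using hNden
  set a : Fin n → ℤ := fun i => (d i).num * k i with haDef
  have ha : ∀ i, (a i : ℚ) = d i * N := by
    intro i
    have hkQ : (N : ℚ) = ((d i).den : ℚ) * (k i : ℚ) := by exact_mod_cast hk i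
    have hden : ((d i).den : ℚ) ≠ 0 := Nat.cast_ne_zero.2 (d i).den_nz
    have hnum : d i * ((d i).den : ℚ) = (d i).num := by
      have h3 := Rat.num_div_den (d i)
      rw [div_eq_iff hden] at h3
      exact h3.symm
    calc (a i : ℚ) = ((d i).num : ℚ) * (k i : ℚ) := by push_cast [haDef]; ring
    _ = d i * ((d i).den : ℚ) * k i := by rw [hnum]
    _ = d i * N := by rw [hkQ]; ring
  -- index equivalences
  have hpn2 : p + (n - p) = n := by omega
  have hpn1 : (p - 1) + (n - p) = n - 1 := by omega
  set eI : Fin p ⊕ Fin (n - p) ≃ Fin n := finSumFinEquiv.trans (finCongr hpn2) with heI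
  set eJ : Fin (p - 1) ⊕ Fin (n - p) ≃ Fin (n - 1) := finSumFinEquiv.trans (finCongr hpn1)
    with heJ
  have eIl : ∀ i' : Fin p, ((eI (Sum.inl i') : Fin n) : ℕ) = (i' : ℕ) := by
    intro i'; simp [heI]
  have eIr : ∀ i'' : Fin (n - p), ((eI (Sum.inr i'') : Fin n) : ℕ) = p + (i'' : ℕ) := by
    intro i''; simp [heI]
  have eJl : ∀ j' : Fin (p - 1), ((eJ (Sum.inl j') : Fin (n - 1)) : ℕ) = (j' : ℕ) := by
    intro j'; simp [heJ]
  have eJr : ∀ j'' : Fin (n - p), ((eJ (Sum.inr j'') : Fin (n - 1)) : ℕ) = (p - 1) + (j'' : ℕ) := by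
    intro j''; simp [heJ]
  -- the integer linear functional on the first p coordinates
  set a' : Fin p → ℤ := fun i' => a (eI (Sum.inl i')) with ha'
  set f : (Fin p → ℤ) →ₗ[ℤ] ℤ :=
    { toFun := fun h => ∑ i', a' i' * h i'
      map_add' := by intros x y; simp [mul_add, Finset.sum_add_distrib]
      map_smul' := by
        intros m x
        simp only [Pi.smul_apply, smul_eq_mul, RingHom.id_apply, Finset.mul_sum]
        exact Finset.sum_congr rfl fun i _ => by ring } with hf
  set K : Submodule ℤ (Fin p → ℤ) := LinearMap.ker f with hK
  obtain ⟨m, B⟩ := Submodule.basisOfPid (Pi.basisFun ℤ (Fin p)) K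
  -- the coercion map to ℚ^p
  set φ : (Fin p → ℤ) →ₗ[ℤ] (Fin p → ℚ) :=
    { toFun := fun h i => (h i : ℚ)
      map_add' := by intros x y; ext i; push_cast; simp
      map_smul' := by
        intros m x; ext i
        simp only [Pi.smul_apply, smul_eq_mul, RingHom.id_apply, zsmul_eq_mul]
        push_cast; ring } with hφ
  have hφinj : Function.Injective φ := by
    intro x y hxy
    funext i
    have h := congrFun hxy i
    simp only [hφ, LinearMap.coe_mk, AddHom.coe_mk] at h
    exact_mod_cast h
  set vQ : Fin m → (Fin p → ℚ) := fun j => φ (K.subtype (B j)) with hvQ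
  have liZ : LinearIndependent ℤ (fun j => K.subtype (B j)) :=
    B.linearIndependent.map' K.subtype K.ker_subtype
  have liZQ : LinearIndependent ℤ vQ := liZ.map' φ (LinearMap.ker_eq_bot.2 hφinj)
  have liQ : LinearIndependent ℚ vQ := (LinearIndependent.iff_fractionRing ℤ ℚ).1 liZQ
  -- the rational functional
  set g : (Fin p → ℚ) →ₗ[ℚ] ℚ :=
    { toFun := fun q => ∑ i', (a' i' : ℚ) * q i'
      map_add' := by intros x y; simp [mul_add, Finset.sum_add_distrib]
      map_smul' := by
        intros r x
        simp only [Pi.smul_apply, smul_eq_mul, RingHom.id_apply, Finset.mul_sum]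
        exact Finset.sum_congr rfl fun i _ => by ring } with hg
  have hfg : ∀ h : Fin p → ℤ, g (φ h) = ((f h : ℤ) : ℚ) := by
    intro h
    simp only [hg, hf, hφ, LinearMap.coe_mk, AddHom.coe_mk]
    push_cast
    rfl
  have hvQg : ∀ j, g (vQ j) = 0 := by
    intro j
    rw [hvQ]
    simp only
    rw [hfg]
    have : f (K.subtype (B j)) = 0 := (B j).2
    rw [this]; rfl
  have hspan : Submodule.span ℚ (Set.range vQ) = LinearMap.ker g := by
    apply le_antisymm
    · rw [Submodule.span_le]
      rintro _ ⟨j, rfl⟩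
      exact LinearMap.mem_ker.2 (hvQg j)
    · intro q hq
      -- clear denominators
      set M0 : ℕ := ∏ i', (q i').den with hM0
      have hM0pos : 0 < M0 := Finset.prod_pos (fun i _ => (q i).pos)
      have hM0Q : (M0 : ℚ) ≠ 0 := Nat.cast_ne_zero.2 hM0pos.ne'
      have hM0den : ∀ i', ((q i').den : ℤ) ∣ (M0 : ℤ) := fun i' =>
        Int.natCast_dvd_natCast.2 (Finset.dvd_prod_of_mem _ (Finset.mem_univ i'))
      choose k2 hk2 using hM0den
      set hv : Fin p → ℤ := fun i' => (q i').num * k2 i' with hhv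
      have hφhv : φ hv = (M0 : ℚ) • q := by
        funext i'
        have hkQ : (M0 : ℚ) = ((q i').den : ℚ) * (k2 i' : ℚ) := by exact_mod_cast hk2 i'
        have hden : ((q i').den : ℚ) ≠ 0 := Nat.cast_ne_zero.2 (q i').den_nz
        have hnum : q i' * ((q i').den : ℚ) = (q i').num := by
          have h3 := Rat.num_div_den (q i')
          rw [div_eq_iff hden] at h3
          exact h3.symm
        show ((hv i' : ℤ) : ℚ) = (M0 : ℚ) * q i'
        rw [hhv]
        push_cast
        rw [hkQ, ← hnum]
        ring
      have hfhv : f hv = 0 := by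
        have h4 : g (φ hv) = 0 := by
          rw [hφhv, _root_.map_smul]
          rw [LinearMap.mem_ker] at hq
          rw [hq]; simp
        rw [hfg] at h4
        exact_mod_cast h4
      have hvK : hv ∈ K := LinearMap.mem_ker.2 hfhv
      have hrepr := B.sum_repr ⟨hv, hvK⟩
      have hrepr2 : φ hv = ∑ j, (B.repr ⟨hv, hvK⟩ j : ℚ) • vQ j := by
        conv_lhs => rw [show hv = K.subtype (⟨hv, hvK⟩ : K) from rfl, ← hrepr]
        rw [map_sum, map_sum]
        apply Finset.sum_congr rfl
        intro j _
        rw [map_zsmul, map_zsmul, Int.cast_smul_eq_zsmul ℚ]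
      have hqspan : q = ∑ j, ((M0 : ℚ)⁻¹ * (B.repr ⟨hv, hvK⟩ j : ℚ)) • vQ j := by
        have h6 : q = (M0 : ℚ)⁻¹ • φ hv := by
          rw [hφhv, smul_smul, inv_mul_cancel₀ hM0Q, one_smul]
        rw [h6, hrepr2, Finset.smul_sum]
        apply Finset.sum_congr rfl
        intro j _
        rw [smul_smul]
      rw [hqspan]
      exact Submodule.sum_mem _ fun j _ => Submodule.smul_mem _ _
        (Submodule.subset_span ⟨j, rfl⟩)
  -- g is a nonzero functional
  obtain ⟨i0, hi0⟩ : ∃ i0 : Fin n, d i0 ≠ 0 := by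
    by_contra hcon
    push_neg at hcon
    exact hd (funext hcon)
  have hi0p : (i0 : ℕ) < p := by
    by_contra hcon
    exact hi0 (hdz i0 (le_of_not_gt hcon))
  have hgne : ∃ q0, g q0 ≠ 0 := by
    refine ⟨Pi.single ⟨(i0 : ℕ), hi0p⟩ 1, ?_⟩
    have h7 : g (Pi.single ⟨(i0 : ℕ), hi0p⟩ 1) = (a' ⟨(i0 : ℕ), hi0p⟩ : ℚ) := by
      simp [hg, Pi.single_apply, Finset.sum_ite_eq', mul_ite]
    rw [h7]
    have h8 : eI (Sum.inl ⟨(i0 : ℕ), hi0p⟩) = i0 := by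
      apply Fin.ext
      rw [eIl]
    show ((a (eI (Sum.inl ⟨(i0 : ℕ), hi0p⟩)) : ℚ)) ≠ 0
    rw [h8, ha]
    exact mul_ne_zero (by exact_mod_cast hi0) hNQ
  have hgsurj : LinearMap.range g = ⊤ := by
    obtain ⟨q0, hq0⟩ := hgne
    rw [LinearMap.range_eq_top]
    intro r
    exact ⟨(r / g q0) • q0, by rw [_root_.map_smul, smul_eq_mul, div_mul_cancel₀ _ hq0]⟩
  have hm : m = p - 1 := by
    have h1 : Module.finrank ℚ (Submodule.span ℚ (Set.range vQ)) = m := by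
      rw [finrank_span_eq_card liQ, Fintype.card_fin]
    have h2 := LinearMap.finrank_range_add_finrank_ker g
    rw [hgsurj] at h2
    rw [finrank_top] at h2
    rw [Module.finrank_self, Module.finrank_fintype_fun_eq_card, Fintype.card_fin] at h2
    rw [hspan] at h1
    omega
  subst hm
  -- the lattice basis vectors as integer vectors
  set w : Fin (p - 1) → (Fin p → ℤ) := fun j => K.subtype (B j) with hw
  have hfw : ∀ j, ∑ i', a' i' * w j i' = 0 := by
    intro j
    have : f (K.subtype (B j)) = 0 := (B j).2
    exact this
  have hwK : ∀ hv : Fin p → ℤ, (∑ i', a' i' * hv i') = 0 →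
      ∃ z : Fin (p - 1) → ℤ, ∀ i', hv i' = ∑ j, z j * w j i' := by
    intro hv hfhv
    have hvK : hv ∈ K := hfhv
    have hrepr := B.sum_repr ⟨hv, hvK⟩
    refine ⟨fun j => B.repr ⟨hv, hvK⟩ j, fun i' => ?_⟩
    have h5 : hv = K.subtype (⟨hv, hvK⟩ : K) := rfl
    conv_lhs => rw [h5, ← hrepr]
    rw [map_sum]
    rw [Finset.sum_apply]
    apply Finset.sum_congr rfl
    intro j _
    rw [map_zsmul]
    simp [hw, smul_eq_mul]
  have hwQindep : ∀ y : Fin (p - 1) → ℚ, (∀ i', ∑ j, (w j i' : ℚ) * y j = 0) → y = 0 := by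
    intro y hy
    have h6 : ∑ j, y j • vQ j = 0 := by
      funext i'
      rw [Finset.sum_apply]
      simp only [Pi.smul_apply, smul_eq_mul, Pi.zero_apply]
      rw [← hy i']
      apply Finset.sum_congr rfl
      intro j _
      have : vQ j i' = ((w j i' : ℤ) : ℚ) := rfl
      rw [this]; ring
    have := (Fintype.linearIndependent_iff.1 liQ) y h6
    funext j; exact this j
  -- the integer base point
  set xbar : Fin n → ℤ := fun i =>
    if h : (i : ℕ) < p then Classical.choose (hsM i h) else 0 with hxbarDef
  have hxbar : ∀ (i : Fin n) (h : (i : ℕ) < p), ((xbar i : ℤ) : ℝ) = s i := by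
    intro i h
    rw [hxbarDef]
    simp only [dif_pos h]
    exact (Classical.choose_spec (hsM i h)).symm
  have hxbar0 : ∀ i : Fin n, ¬ ((i : ℕ) < p) → xbar i = 0 := by
    intro i h
    rw [hxbarDef]
    simp only [dif_neg h]
  -- the matrix T
  set T : Matrix (Fin n) (Fin (n - 1)) ℚ := fun i j =>
    Sum.elim
      (fun i' => Sum.elim (fun j' => ((w j' i' : ℤ) : ℚ)) (fun _ => 0) (eJ.symm j))
      (fun i'' => Sum.elim (fun _ => 0) (fun j'' => if i'' = j'' then (1 : ℚ) else 0) (eJ.symm j))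
      (eI.symm i) with hT
  have hT1 : ∀ (i' : Fin p) (j' : Fin (p - 1)),
      T (eI (Sum.inl i')) (eJ (Sum.inl j')) = ((w j' i' : ℤ) : ℚ) := by
    intro i' j'; simp [hT, Equiv.symm_apply_apply]
  have hT2 : ∀ (i' : Fin p) (j'' : Fin (n - p)),
      T (eI (Sum.inl i')) (eJ (Sum.inr j'')) = 0 := by
    intro i' j''; simp [hT, Equiv.symm_apply_apply]
  have hT3 : ∀ (i'' : Fin (n - p)) (j' : Fin (p - 1)),
      T (eI (Sum.inr i'')) (eJ (Sum.inl j')) = 0 := by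
    intro i'' j'; simp [hT, Equiv.symm_apply_apply]
  have hT4 : ∀ (i'' j'' : Fin (n - p)),
      T (eI (Sum.inr i'')) (eJ (Sum.inr j'')) = if i'' = j'' then (1 : ℚ) else 0 := by
    intro i'' j''; simp [hT, Equiv.symm_apply_apply]
  set TR : Matrix (Fin n) (Fin (n - 1)) ℝ := T.map ((↑) : ℚ → ℝ) with hTR
  -- sum splittings
  have sumJQ : ∀ (F : Fin (n - 1) → ℚ),
      ∑ j, F j = (∑ j', F (eJ (Sum.inl j'))) + ∑ j'', F (eJ (Sum.inr j'')) := by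
    intro F; rw [← Equiv.sum_comp eJ F, Fintype.sum_sum_type]
  have sumJR : ∀ (F : Fin (n - 1) → ℝ),
      ∑ j, F j = (∑ j', F (eJ (Sum.inl j'))) + ∑ j'', F (eJ (Sum.inr j'')) := by
    intro F; rw [← Equiv.sum_comp eJ F, Fintype.sum_sum_type]
  have sumIR : ∀ (F : Fin n → ℝ),
      ∑ i, F i = (∑ i', F (eI (Sum.inl i'))) + ∑ i'', F (eI (Sum.inr i'')) := by
    intro F; rw [← Equiv.sum_comp eI F, Fintype.sum_sum_type]
  have hmulQ : ∀ (y : Fin (n - 1) → ℚ) (i : Fin n), T.mulVec y i = ∑ j, T i j * y j := by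
    intro y i; simp [Matrix.mulVec, dotProduct]
  have hmulR : ∀ (y : Fin (n - 1) → ℝ) (i : Fin n), TR.mulVec y i = ∑ j, (T i j : ℝ) * y j := by
    intro y i; simp [Matrix.mulVec, dotProduct, hTR]
  have hνQ1 : ∀ (y : Fin (n - 1) → ℚ) (i' : Fin p),
      T.mulVec y (eI (Sum.inl i')) = ∑ j', ((w j' i' : ℤ) : ℚ) * y (eJ (Sum.inl j')) := by
    intro y i'
    rw [hmulQ, sumJQ]
    have h1 : (∑ j'', T (eI (Sum.inl i')) (eJ (Sum.inr j'')) * y (eJ (Sum.inr j''))) = 0 :=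
      Finset.sum_eq_zero fun j'' _ => by rw [hT2]; ring
    rw [h1, add_zero]
    exact Finset.sum_congr rfl fun j' _ => by rw [hT1]
  have hνQ2 : ∀ (y : Fin (n - 1) → ℚ) (i'' : Fin (n - p)),
      T.mulVec y (eI (Sum.inr i'')) = y (eJ (Sum.inr i'')) := by
    intro y i''
    rw [hmulQ, sumJQ]
    have h1 : (∑ j', T (eI (Sum.inr i'')) (eJ (Sum.inl j')) * y (eJ (Sum.inl j'))) = 0 :=
      Finset.sum_eq_zero fun j' _ => by rw [hT3]; ring
    rw [h1, zero_add]
    have h2 : ∀ j'', T (eI (Sum.inr i'')) (eJ (Sum.inr j'')) * y (eJ (Sum.inr j'')) =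
        if j'' = i'' then y (eJ (Sum.inr j'')) else 0 := by
      intro j''
      rw [hT4]
      by_cases h : i'' = j''
      · subst h; simp
      · rw [if_neg h, if_neg (fun hh : j'' = i'' => h hh.symm)]; simp
    rw [Finset.sum_congr rfl fun j'' _ => h2 j'', Finset.sum_ite_eq' Finset.univ i'']
    simp
  have hνR1 : ∀ (y : Fin (n - 1) → ℝ) (i' : Fin p),
      TR.mulVec y (eI (Sum.inl i')) = ∑ j', ((w j' i' : ℤ) : ℝ) * y (eJ (Sum.inl j')) := by
    intro y i'
    rw [hmulR, sumJR]
    have h1 : (∑ j'', ((T (eI (Sum.inl i')) (eJ (Sum.inr j'')) : ℚ) : ℝ) * y (eJ (Sum.inr j''))) = 0 :=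
      Finset.sum_eq_zero fun j'' _ => by rw [hT2]; simp
    rw [h1, add_zero]
    refine Finset.sum_congr rfl fun j' _ => by rw [hT1]; push_cast; ring
  have hνR2 : ∀ (y : Fin (n - 1) → ℝ) (i'' : Fin (n - p)),
      TR.mulVec y (eI (Sum.inr i'')) = y (eJ (Sum.inr i'')) := by
    intro y i''
    rw [hmulR, sumJR]
    have h1 : (∑ j', ((T (eI (Sum.inr i'')) (eJ (Sum.inl j')) : ℚ) : ℝ) * y (eJ (Sum.inl j'))) = 0 :=
      Finset.sum_eq_zero fun j' _ => by rw [hT3]; simp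
    rw [h1, zero_add]
    have h2 : ∀ j'', ((T (eI (Sum.inr i'')) (eJ (Sum.inr j'')) : ℚ) : ℝ) * y (eJ (Sum.inr j'')) =
        if j'' = i'' then y (eJ (Sum.inr j'')) else 0 := by
      intro j''
      rw [hT4]
      by_cases h : i'' = j''
      · subst h; simp
      · rw [if_neg h, if_neg (fun hh : j'' = i'' => h hh.symm)]; simp
    rw [Finset.sum_congr rfl fun j'' _ => h2 j'', Finset.sum_ite_eq' Finset.univ i'']
    simp
  -- injectivity of T over the rationals and reals
  have hTinjQ : ∀ y : Fin (n - 1) → ℚ, T.mulVec y = 0 → y = 0 := by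
    intro y hy
    have htail : ∀ i'' : Fin (n - p), y (eJ (Sum.inr i'')) = 0 := by
      intro i''
      have := congrFun hy (eI (Sum.inr i''))
      rwa [hνQ2] at this
    have hhead : ∀ j' : Fin (p - 1), y (eJ (Sum.inl j')) = 0 := by
      have hrel : ∀ i' : Fin p, ∑ j', ((w j' i' : ℤ) : ℚ) * y (eJ (Sum.inl j')) = 0 := by
        intro i'
        have := congrFun hy (eI (Sum.inl i'))
        rwa [hνQ1] at this
      have := hwQindep (fun j' => y (eJ (Sum.inl j'))) hrel
      intro j'
      exact congrFun this j'
    funext j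
    rcases hjj : eJ.symm j with j' | j''
    · have : j = eJ (Sum.inl j') := by rw [← hjj, Equiv.apply_symm_apply]
      rw [this]; exact hhead j'
    · have : j = eJ (Sum.inr j'') := by rw [← hjj, Equiv.apply_symm_apply]
      rw [this]; exact htail j''
  have hTinjR : ∀ y : Fin (n - 1) → ℝ, TR.mulVec y = 0 → y = 0 := by
    rw [hTR]
    exact real_inj_of_rat_inj T hTinjQ
  -- the rows of d kill the columns of T
  have hdw : ∀ j' : Fin (p - 1),
      ∑ i', ((d (eI (Sum.inl i')) : ℝ)) * ((w j' i' : ℤ) : ℝ) = 0 := by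
    intro j'
    have hdi : ∀ i' : Fin p, (d (eI (Sum.inl i')) : ℝ) = ((a' i' : ℤ) : ℝ) / (N : ℝ) := by
      intro i'
      have h1 : (a' i' : ℚ) = d (eI (Sum.inl i')) * N := ha _
      have hNR : ((N : ℚ) : ℝ) ≠ 0 := by exact_mod_cast hNQ
      rw [eq_div_iff (by exact_mod_cast hNQ)]
      exact_mod_cast congrArg ((↑) : ℚ → ℝ) h1.symm
    calc ∑ i', ((d (eI (Sum.inl i')) : ℝ)) * ((w j' i' : ℤ) : ℝ)
        = (∑ i', ((a' i' * w j' i' : ℤ) : ℝ)) / (N : ℝ) := by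
          rw [Finset.sum_div]
          exact Finset.sum_congr rfl fun i' _ => by rw [hdi]; push_cast; ring
      _ = 0 := by
          rw [← Int.cast_sum, hfw j']
          simp
  have hdT : ∀ y : Fin (n - 1) → ℝ, (fun i => (d i : ℝ)) ⬝ᵥ TR.mulVec y = 0 := by
    intro y
    show ∑ i, (d i : ℝ) * TR.mulVec y i = 0
    rw [sumIR]
    have h2 : (∑ i'', (d (eI (Sum.inr i'')) : ℝ) * TR.mulVec y (eI (Sum.inr i''))) = 0 := by
      apply Finset.sum_eq_zero
      intro i'' _
      have : d (eI (Sum.inr i'')) = 0 := hdz _ (by rw [eIr]; omega)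
      rw [this]; simp
    rw [h2, add_zero]
    calc ∑ i', (d (eI (Sum.inl i')) : ℝ) * TR.mulVec y (eI (Sum.inl i'))
        = ∑ i', ∑ j', (d (eI (Sum.inl i')) : ℝ) * (((w j' i' : ℤ) : ℝ) * y (eJ (Sum.inl j'))) := by
          refine Finset.sum_congr rfl fun i' _ => ?_
          rw [hνR1, Finset.mul_sum]
      _ = ∑ j', (∑ i', (d (eI (Sum.inl i')) : ℝ) * ((w j' i' : ℤ) : ℝ)) * y (eJ (Sum.inl j')) := by
          rw [Finset.sum_comm]
          refine Finset.sum_congr rfl fun j' _ => ?_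
          rw [Finset.sum_mul]
          exact Finset.sum_congr rfl fun i' _ => by ring
      _ = 0 := Finset.sum_eq_zero fun j' _ => by rw [hdw j']; ring
  have hdxbar : (fun i => (d i : ℝ)) ⬝ᵥ (fun i => ((xbar i : ℤ) : ℝ)) = (β : ℝ) := by
    have h3 : ∀ i : Fin n, (d i : ℝ) * ((xbar i : ℤ) : ℝ) = (d i : ℝ) * s i := by
      intro i
      by_cases h : (i : ℕ) < p
      · rw [hxbar i h]
      · rw [hdz i (le_of_not_gt h)]; simp
    show ∑ i, (d i : ℝ) * ((xbar i : ℤ) : ℝ) = (β : ℝ)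
    rw [Finset.sum_congr rfl fun i _ => h3 i]
    exact hsH
  have hη_inH : ∀ y : Fin (n - 1) → ℝ,
      (fun i => (d i : ℝ)) ⬝ᵥ ((fun i => ((xbar i : ℤ) : ℝ)) + TR.mulVec y) = (β : ℝ) := by
    intro y
    rw [dotProduct_add, hdxbar, hdT, add_zero]
  -- the hyperplane is the image of η
  have hHeq : {x : Fin n → ℝ | (fun i => (d i : ℝ)) ⬝ᵥ x = (β : ℝ)} =
      (fun y : Fin (n - 1) → ℝ =>
        (fun i => ((xbar i : ℤ) : ℝ)) + (T.map ((↑) : ℚ → ℝ)).mulVec y) '' Set.univ := by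
    ext x
    simp only [Set.mem_setOf_eq, Set.image_univ, Set.mem_range]
    constructor
    · intro hx
      set ℓ : (Fin n → ℝ) →ₗ[ℝ] ℝ :=
        { toFun := fun v => (fun i => (d i : ℝ)) ⬝ᵥ v
          map_add' := by intros u v; exact dotProduct_add _ _ _
          map_smul' := by
            intros r u
            simp only [RingHom.id_apply]
            exact dotProduct_smul r _ _ } with hℓ
      have hinjR : Function.Injective TR.mulVecLin := by
        rw [← LinearMap.ker_eq_bot, LinearMap.ker_eq_bot']
        intro y hy
        exact hTinjR y hy
      have hℓsurj : LinearMap.range ℓ = ⊤ := by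
        rw [LinearMap.range_eq_top]
        intro r
        refine ⟨(r / (d i0 : ℝ)) • (Pi.single i0 1 : Fin n → ℝ), ?_⟩
        have h5 : ℓ (Pi.single i0 1) = (d i0 : ℝ) := by
          show (fun i => (d i : ℝ)) ⬝ᵥ Pi.single i0 1 = (d i0 : ℝ)
          simp [dotProduct, Pi.single_apply, mul_ite, Finset.sum_ite_eq']
        rw [_root_.map_smul, h5, smul_eq_mul, div_mul_cancel₀]
        exact_mod_cast hi0
      have hrange : LinearMap.range TR.mulVecLin = LinearMap.ker ℓ := by
        apply Submodule.eq_of_le_of_finrank_eq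
        · rintro _ ⟨y, rfl⟩
          exact hdT y
        · rw [LinearMap.finrank_range_of_inj hinjR, Module.finrank_fintype_fun_eq_card,
            Fintype.card_fin]
          have h6 := LinearMap.finrank_range_add_finrank_ker ℓ
          rw [hℓsurj, finrank_top, Module.finrank_self, Module.finrank_fintype_fun_eq_card,
            Fintype.card_fin] at h6
          omega
      have hu : (x - fun i => ((xbar i : ℤ) : ℝ)) ∈ LinearMap.ker ℓ := by
        rw [LinearMap.mem_ker]
        show (fun i => (d i : ℝ)) ⬝ᵥ (x - fun i => ((xbar i : ℤ) : ℝ)) = 0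
        rw [dotProduct_sub, hdxbar, hx, sub_self]
      rw [← hrange] at hu
      obtain ⟨y, hy⟩ := hu
      refine ⟨y, ?_⟩
      show (fun i => ((xbar i : ℤ) : ℝ)) + TR.mulVec y = x
      have : TR.mulVecLin y = TR.mulVec y := rfl
      rw [this] at hy
      rw [hy]
      abel
    · rintro ⟨y, rfl⟩
      exact hη_inH y
  refine ⟨xbar, T, ?_, hHeq, ?_, ?_⟩
  · -- rank
    have hinj : Function.Injective T.mulVecLin := by
      rw [← LinearMap.ker_eq_bot, LinearMap.ker_eq_bot']
      intro y hy
      exact hTinjQ y hy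
    rw [Matrix.rank, LinearMap.finrank_range_of_inj hinj, Module.finrank_fintype_fun_eq_card,
      Fintype.card_fin]
  · -- the mixed-integer set
    have hheadsum : ∀ u : Fin n → ℝ,
        ∑ i, (d i : ℝ) * u i = ∑ i', (d (eI (Sum.inl i')) : ℝ) * u (eI (Sum.inl i')) := by
      intro u
      rw [sumIR]
      have h0 : (∑ i'', (d (eI (Sum.inr i'')) : ℝ) * u (eI (Sum.inr i''))) = 0 :=
        Finset.sum_eq_zero fun i'' _ => by
          rw [hdz _ (by rw [eIr]; omega)]; simp
      rw [h0, add_zero]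
    ext x
    constructor
    · rintro ⟨hxH, hxM⟩
      have hxH' : ∑ i, (d i : ℝ) * x i = (β : ℝ) := hxH
      have hzx : ∀ i' : Fin p, ∃ z : ℤ, x (eI (Sum.inl i')) = (z : ℝ) := by
        intro i'
        exact hxM _ (by rw [eIl]; exact i'.2)
      choose zx hzxs using hzx
      set hv : Fin p → ℤ := fun i' => zx i' - xbar (eI (Sum.inl i')) with hhv
      have hfhv : ∑ i', a' i' * hv i' = 0 := by
        have h4 : ∀ i' : Fin p, ((a' i' : ℤ) : ℝ) = (N : ℝ) * (d (eI (Sum.inl i')) : ℝ) := by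
          intro i'
          have h1 : (a' i' : ℚ) = d (eI (Sum.inl i')) * N := ha _
          have := congrArg ((↑) : ℚ → ℝ) h1
          push_cast at this ⊢
          rw [this]; ring
        have hdxbar' : ∑ i, (d i : ℝ) * ((xbar i : ℤ) : ℝ) = (β : ℝ) := hdxbar
        have hreal : ((∑ i', a' i' * hv i' : ℤ) : ℝ) = 0 := by
          simp only [hhv]
          push_cast
          have e1 : ∑ i', ((a' i' : ℤ) : ℝ) * ((zx i' : ℤ) : ℝ) =
              (N : ℝ) * ∑ i, (d i : ℝ) * x i := by
            rw [hheadsum x, Finset.mul_sum]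
            refine Finset.sum_congr rfl fun i' _ => ?_
            rw [h4, hzxs]; ring
          have e2 : ∑ i', ((a' i' : ℤ) : ℝ) * ((xbar (eI (Sum.inl i')) : ℤ) : ℝ) =
              (N : ℝ) * ∑ i, (d i : ℝ) * ((xbar i : ℤ) : ℝ) := by
            rw [hheadsum (fun i => ((xbar i : ℤ) : ℝ)), Finset.mul_sum]
            refine Finset.sum_congr rfl fun i' _ => ?_
            rw [h4]; ring
          have e3 : ∑ i', ((a' i' : ℤ) : ℝ) * (((zx i' : ℤ) : ℝ) - ((xbar (eI (Sum.inl i')) : ℤ) : ℝ)) =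
              ∑ i', ((a' i' : ℤ) : ℝ) * ((zx i' : ℤ) : ℝ) -
              ∑ i', ((a' i' : ℤ) : ℝ) * ((xbar (eI (Sum.inl i')) : ℤ) : ℝ) := by
            rw [← Finset.sum_sub_distrib]
            exact Finset.sum_congr rfl fun i' _ => by ring
          rw [e3, e1, e2, hxH', hdxbar', sub_self]
        exact_mod_cast hreal
      obtain ⟨z, hz⟩ := hwK hv hfhv
      refine ⟨fun j => Sum.elim (fun j' => ((z j' : ℤ) : ℝ))
        (fun j'' => x (eI (Sum.inr j''))) (eJ.symm j), ?_, ?_⟩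
      · -- y is in the mixed set
        intro j hj
        have hj' : (j : ℕ) < p - 1 := hj
        have hjeq : j = eJ (Sum.inl ⟨(j : ℕ), hj'⟩) := by
          apply Fin.ext
          rw [eJl]
        refine ⟨z ⟨(j : ℕ), hj'⟩, ?_⟩
        have h7 : eJ.symm j = Sum.inl ⟨(j : ℕ), hj'⟩ := by
          rw [Equiv.symm_apply_eq]
          exact hjeq
        simp [h7]
      · -- η y = x
        funext i
        rcases hii : eI.symm i with i' | i''
        · have hieq : i = eI (Sum.inl i') := by rw [← hii, Equiv.apply_symm_apply]
          subst hieq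
          show ((xbar (eI (Sum.inl i')) : ℤ) : ℝ) + TR.mulVec _ (eI (Sum.inl i')) = _
          rw [hνR1]
          have e5 : ∑ j', ((w j' i' : ℤ) : ℝ) *
              Sum.elim (fun j'0 => ((z j'0 : ℤ) : ℝ)) (fun j'' => x (eI (Sum.inr j'')))
                (eJ.symm (eJ (Sum.inl j'))) = ((hv i' : ℤ) : ℝ) := by
            have e6 : ∀ j' : Fin (p - 1), eJ.symm (eJ (Sum.inl j')) = Sum.inl j' :=
              fun j' => Equiv.symm_apply_apply _ _
            rw [hz i']
            push_cast
            refine Finset.sum_congr rfl fun j' _ => ?_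
            rw [e6]
            show ((w j' i' : ℤ) : ℝ) * ((z j' : ℤ) : ℝ) = ((z j' : ℤ) : ℝ) * ((w j' i' : ℤ) : ℝ)
            ring
          rw [e5, hhv]
          push_cast
          rw [hzxs i']
          ring
        · have hieq : i = eI (Sum.inr i'') := by rw [← hii, Equiv.apply_symm_apply]
          subst hieq
          show ((xbar (eI (Sum.inr i'')) : ℤ) : ℝ) + TR.mulVec _ (eI (Sum.inr i'')) = _
          rw [hνR2, hxbar0 _ (by rw [eIr]; omega)]
          simp [Equiv.symm_apply_apply]
    · rintro ⟨y, hyM, rfl⟩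
      refine ⟨hη_inH y, ?_⟩
      intro i hi
      have hieq : i = eI (Sum.inl ⟨(i : ℕ), hi⟩) := by
        apply Fin.ext
        rw [eIl]
      have hyz : ∀ j' : Fin (p - 1), ∃ zz : ℤ, y (eJ (Sum.inl j')) = (zz : ℝ) := by
        intro j'
        exact hyM _ (by rw [eJl]; exact j'.2)
      choose zz hzz using hyz
      refine ⟨xbar (eI (Sum.inl ⟨(i : ℕ), hi⟩)) + ∑ j', w j' ⟨(i : ℕ), hi⟩ * zz j', ?_⟩
      have hval : ((fun i => ((xbar i : ℤ) : ℝ)) + TR.mulVec y) i =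
          ((xbar (eI (Sum.inl ⟨(i : ℕ), hi⟩)) : ℤ) : ℝ) +
            TR.mulVec y (eI (Sum.inl ⟨(i : ℕ), hi⟩)) := by
        rw [← hieq]
        rfl
      show ((fun i => ((xbar i : ℤ) : ℝ)) + TR.mulVec y) i = _
      rw [hval, hνR1]
      push_cast
      congr 1
      refine Finset.sum_congr rfl fun j' _ => ?_
      rw [hzz j']
  · -- the ellipsoid / singleton part
    intro hne
    have hQRsym : (Q.map ((↑) : ℚ → ℝ))ᵀ = Q.map ((↑) : ℚ → ℝ) := by
      have h1 := hQ.1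
      ext i j
      have h2 := congrFun (congrFun h1 i) j
      simpa [Matrix.conjTranspose_apply] using h2
    set v : Fin n → ℚ := (fun i => (xbar i : ℚ)) - c with hv2
    set Q' : Matrix (Fin (n - 1)) (Fin (n - 1)) ℚ := Tᵀ * Q * T with hQ'def
    set bb : Fin (n - 1) → ℚ := Tᵀ.mulVec (Q.mulVec v) with hbb
    have hQ'map : Q'.map ((↑) : ℚ → ℝ) = TRᵀ * (Q.map ((↑) : ℚ → ℝ)) * TR := by
      rw [hQ'def, hTR]
      rw [show ((↑) : ℚ → ℝ) = ⇑(Rat.castHom ℝ) from rfl, Matrix.map_mul, Matrix.map_mul,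
        Matrix.transpose_map]
    have hconj : ∀ k : ℕ, ∀ M : Matrix (Fin k) (Fin k) ℝ, Mᴴ = Mᵀ := by
      intro k M; ext i j; simp [Matrix.conjTranspose_apply]
    have hQ'Rpos : (Q'.map ((↑) : ℚ → ℝ)).PosDef := by
      rw [hQ'map]
      refine Matrix.PosDef.of_dotProduct_mulVec_pos ?_ ?_
      · show (TRᵀ * Q.map ((↑) : ℚ → ℝ) * TR)ᴴ = _
        rw [hconj, Matrix.transpose_mul, Matrix.transpose_mul, Matrix.transpose_transpose,
          hQRsym, Matrix.mul_assoc]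
      · intro x hx
        have hTx : TR.mulVec x ≠ 0 := fun h0 => hx (hTinjR x h0)
        have h3 := hQ.dotProduct_mulVec_pos hTx
        have e1 : star x ⬝ᵥ ((TRᵀ * Q.map ((↑) : ℚ → ℝ) * TR) *ᵥ x) =
            star (TR *ᵥ x) ⬝ᵥ ((Q.map ((↑) : ℚ → ℝ)) *ᵥ (TR *ᵥ x)) := by
          rw [star_trivial, star_trivial, ← Matrix.mulVec_mulVec, ← Matrix.mulVec_mulVec,
            ← dot_mulVec_comm]
        rw [e1]
        exact h3
    have hQ'Rsym : (Q'.map ((↑) : ℚ → ℝ))ᵀ = Q'.map ((↑) : ℚ → ℝ) := by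
      have h1 := hQ'Rpos.1
      ext i j
      have h2 := congrFun (congrFun h1 i) j
      simpa [Matrix.conjTranspose_apply] using h2
    have hdet' : Q'.det ≠ 0 := by
      intro h0
      have h1 := hQ'Rpos.det_pos
      have h2 := RingHom.map_det (Rat.castHom ℝ) Q'
      rw [RingHom.mapMatrix_apply] at h2
      have h2' : ((Q'.det : ℚ) : ℝ) = (Q'.map ((↑) : ℚ → ℝ)).det := h2
      rw [← h2', h0] at h1
      simp at h1
    have hQ'inv : Q' * Q'⁻¹ = 1 := Matrix.mul_nonsing_inv _ (isUnit_iff_ne_zero.2 hdet')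
    set c' : Fin (n - 1) → ℚ := -(Q'⁻¹.mulVec bb) with hc'
    have hQ'c' : Q'.mulVec c' = -bb := by
      rw [hc', Matrix.mulVec_neg, Matrix.mulVec_mulVec, hQ'inv, Matrix.one_mulVec]
    set ρ : ℚ := v ⬝ᵥ Q.mulVec v - c' ⬝ᵥ Q'.mulVec c' with hρdef
    have hsR : (fun i => ((xbar i : ℤ) : ℝ)) - (fun i => (c i : ℝ)) = qr v := by
      funext i
      show ((xbar i : ℤ) : ℝ) - (c i : ℝ) = ((v i : ℚ) : ℝ)
      rw [hv2]
      show _ = (((fun i => (xbar i : ℚ)) i - c i : ℚ) : ℝ)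
      push_cast
      ring
    have hkey : ∀ y : Fin (n - 1) → ℝ,
        ((fun i => ((xbar i : ℤ) : ℝ)) + TR.mulVec y - fun i => (c i : ℝ)) ⬝ᵥ
          (Q.map ((↑) : ℚ → ℝ)).mulVec
            ((fun i => ((xbar i : ℤ) : ℝ)) + TR.mulVec y - fun i => (c i : ℝ)) =
        ((y - qr c') ⬝ᵥ (Q'.map ((↑) : ℚ → ℝ)).mulVec (y - qr c')) + ((ρ : ℚ) : ℝ) := by
      intro y
      have harg : ((fun i => ((xbar i : ℤ) : ℝ)) + TR.mulVec y - fun i => (c i : ℝ)) =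
          qr v + TR.mulVec y := by
        rw [← hsR]
        abel
      rw [harg]
      rw [quad_expand _ hQRsym (qr v) (TR.mulVec y)]
      have e2 : (TR.mulVec y) ⬝ᵥ (Q.map ((↑) : ℚ → ℝ)).mulVec (qr v) = y ⬝ᵥ qr bb := by
        rw [dot_mulVec_comm]
        congr 1
        rw [qr_mulVec, hTR, ← Matrix.transpose_map, qr_mulVec]
      have e3 : (TR.mulVec y) ⬝ᵥ (Q.map ((↑) : ℚ → ℝ)).mulVec (TR.mulVec y) =
          y ⬝ᵥ (Q'.map ((↑) : ℚ → ℝ)).mulVec y := by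
        rw [hQ'map, ← Matrix.mulVec_mulVec, ← Matrix.mulVec_mulVec, ← dot_mulVec_comm]
      have e4 : qr v ⬝ᵥ (Q.map ((↑) : ℚ → ℝ)).mulVec (qr v) = ((v ⬝ᵥ Q.mulVec v : ℚ) : ℝ) := by
        rw [qr_mulVec, qr_dot]
      have e5 : (y - qr c') ⬝ᵥ (Q'.map ((↑) : ℚ → ℝ)).mulVec (y - qr c') =
          ((c' ⬝ᵥ Q'.mulVec c' : ℚ) : ℝ) + 2 * (y ⬝ᵥ qr bb) +
            y ⬝ᵥ (Q'.map ((↑) : ℚ → ℝ)).mulVec y := by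
        have h8 : y - qr c' = -(qr c') + y := by abel
        rw [h8, quad_expand _ hQ'Rsym (-(qr c')) y]
        have h9 : (Q'.map ((↑) : ℚ → ℝ)).mulVec (qr c') = qr (Q'.mulVec c') := qr_mulVec _ _
        have hqrneg : qr (-bb) = -(qr bb) := by funext i; simp [qr]
        have h10 : (-(qr c')) ⬝ᵥ (Q'.map ((↑) : ℚ → ℝ)).mulVec (-(qr c')) =
            ((c' ⬝ᵥ Q'.mulVec c' : ℚ) : ℝ) := by
          rw [Matrix.mulVec_neg, dotProduct_neg, neg_dotProduct, neg_neg, h9,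
            qr_dot]
        have h11 : y ⬝ᵥ (Q'.map ((↑) : ℚ → ℝ)).mulVec (-(qr c')) = y ⬝ᵥ qr bb := by
          rw [Matrix.mulVec_neg, dotProduct_neg, h9, hQ'c', hqrneg,
            dotProduct_neg, neg_neg]
        rw [h10, h11]
      rw [e2, e3, e4, e5, hρdef]
      push_cast
      ring
    have hpre : (fun y : Fin (n - 1) → ℝ =>
          (fun i => ((xbar i : ℤ) : ℝ)) + TR.mulVec y) ⁻¹'
        ({x : Fin n → ℝ | (x - fun i => (c i : ℝ)) ⬝ᵥ (Q.map ((↑) : ℚ → ℝ)).mulVec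
            (x - fun i => (c i : ℝ)) ≤ 1} ∩
          {x : Fin n → ℝ | (fun i => (d i : ℝ)) ⬝ᵥ x = (β : ℝ)}) =
        {y : Fin (n - 1) → ℝ | (y - qr c') ⬝ᵥ (Q'.map ((↑) : ℚ → ℝ)).mulVec (y - qr c')
            + ((ρ : ℚ) : ℝ) ≤ 1} := by
      ext y
      simp only [Set.mem_preimage, Set.mem_inter_iff, Set.mem_setOf_eq]
      constructor
      · rintro ⟨h1, -⟩
        rw [← hkey y]
        exact h1
      · intro h1
        exact ⟨by rw [hkey y]; exact h1, hη_inH y⟩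
    have hquad0 : ∀ z : Fin (n - 1) → ℝ, 0 ≤ z ⬝ᵥ (Q'.map ((↑) : ℚ → ℝ)).mulVec z := by
      intro z
      rcases eq_or_ne z 0 with rfl | hz
      · simp
      · have h1 := hQ'Rpos.dotProduct_mulVec_pos hz
        rw [star_trivial] at h1
        linarith
    obtain ⟨x₀, hx₀E, hx₀H⟩ := hne
    have hx₀img : x₀ ∈ (fun y : Fin (n - 1) → ℝ =>
        (fun i => ((xbar i : ℤ) : ℝ)) + TR.mulVec y) '' Set.univ := by
      rw [← hHeq]
      exact hx₀H
    obtain ⟨y₀, -, hy₀⟩ := hx₀img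
    have hy₀pre : (y₀ - qr c') ⬝ᵥ (Q'.map ((↑) : ℚ → ℝ)).mulVec (y₀ - qr c') +
        ((ρ : ℚ) : ℝ) ≤ 1 := by
      have h1 : y₀ ∈ (fun y : Fin (n - 1) → ℝ =>
          (fun i => ((xbar i : ℤ) : ℝ)) + TR.mulVec y) ⁻¹'
          ({x : Fin n → ℝ | (x - fun i => (c i : ℝ)) ⬝ᵥ (Q.map ((↑) : ℚ → ℝ)).mulVec
              (x - fun i => (c i : ℝ)) ≤ 1} ∩
            {x : Fin n → ℝ | (fun i => (d i : ℝ)) ⬝ᵥ x = (β : ℝ)}) := by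
        simp only [Set.mem_preimage]
        rw [show (fun i => ((xbar i : ℤ) : ℝ)) + TR.mulVec y₀ = x₀ from hy₀]
        exact ⟨hx₀E, hx₀H⟩
      rwa [hpre] at h1
    have hρ1 : ρ ≤ 1 := by
      have h0 := hquad0 (y₀ - qr c')
      have h1 : ((ρ : ℚ) : ℝ) ≤ 1 := by linarith
      exact_mod_cast h1
    rcases lt_or_eq_of_le hρ1 with hlt | heq1
    · -- proper ellipsoid
      have h1ρ : (0 : ℝ) < 1 - ((ρ : ℚ) : ℝ) := by
        have h2 : ((ρ : ℚ) : ℝ) < 1 := by exact_mod_cast hlt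
        linarith
      have hmapsmul : ((1 - ρ)⁻¹ • Q').map ((↑) : ℚ → ℝ) =
          (1 - ((ρ : ℚ) : ℝ))⁻¹ • (Q'.map ((↑) : ℚ → ℝ)) := by
        ext i j
        show (((1 - ρ)⁻¹ * Q' i j : ℚ) : ℝ) = (1 - ((ρ : ℚ) : ℝ))⁻¹ * ((Q' i j : ℚ) : ℝ)
        push_cast
        ring
      refine ⟨c', Or.inl ⟨(1 - ρ)⁻¹ • Q', ?_, ?_⟩⟩
      · rw [hmapsmul]
        refine Matrix.PosDef.of_dotProduct_mulVec_pos ?_ ?_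
        · show ((1 - ((ρ : ℚ) : ℝ))⁻¹ • Q'.map ((↑) : ℚ → ℝ))ᴴ = _
          rw [hconj, Matrix.transpose_smul, hQ'Rsym]
        · intro x hx
          rw [star_trivial]
          have h2 := hQ'Rpos.dotProduct_mulVec_pos hx
          rw [star_trivial] at h2
          rw [Matrix.smul_mulVec, dotProduct_smul, smul_eq_mul]
          exact mul_pos (inv_pos.2 h1ρ) h2
      · have hfinal : (fun y : Fin (n - 1) → ℝ =>
              (fun i => ((xbar i : ℤ) : ℝ)) + TR.mulVec y) ⁻¹'
            ({x : Fin n → ℝ | (x - fun i => (c i : ℝ)) ⬝ᵥ (Q.map ((↑) : ℚ → ℝ)).mulVec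
                (x - fun i => (c i : ℝ)) ≤ 1} ∩
              {x : Fin n → ℝ | (fun i => (d i : ℝ)) ⬝ᵥ x = (β : ℝ)}) =
            {y : Fin (n - 1) → ℝ | (y - qr c') ⬝ᵥ
              (((1 - ρ)⁻¹ • Q').map ((↑) : ℚ → ℝ)).mulVec (y - qr c') ≤ 1} := by
          rw [hpre]
          ext y
          simp only [Set.mem_setOf_eq]
          rw [hmapsmul, Matrix.smul_mulVec, dotProduct_smul, smul_eq_mul]
          rw [inv_mul_le_one₀ h1ρ]
          constructor <;> intro h <;> linarith
        exact hfinal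
    · -- singleton
      refine ⟨c', Or.inr ?_⟩
      have hρR : ((ρ : ℚ) : ℝ) = 1 := by exact_mod_cast heq1
      have hfinal : (fun y : Fin (n - 1) → ℝ =>
            (fun i => ((xbar i : ℤ) : ℝ)) + TR.mulVec y) ⁻¹'
          ({x : Fin n → ℝ | (x - fun i => (c i : ℝ)) ⬝ᵥ (Q.map ((↑) : ℚ → ℝ)).mulVec
              (x - fun i => (c i : ℝ)) ≤ 1} ∩
            {x : Fin n → ℝ | (fun i => (d i : ℝ)) ⬝ᵥ x = (β : ℝ)}) = {qr c'} := by
        rw [hpre]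
        ext y
        simp only [Set.mem_setOf_eq, Set.mem_singleton_iff]
        constructor
        · intro h1
          by_contra hne'
          have h2 : y - qr c' ≠ 0 := sub_ne_zero_of_ne hne'
          have h3 := hQ'Rpos.dotProduct_mulVec_pos h2
          rw [star_trivial] at h3
          rw [hρR] at h1
          linarith
        · rintro rfl
          rw [hρR]
          simp
      exact hfinal
end

section
/- Let H be a symmetric matrix in ℚ^{n×n}, h ∈ ℚⁿ, W ∈ ℚ^{m×n}, w ∈ ℚᵐ, and p ∈ {0,…,n}. Assume the polyhedron P := {x ∈ ℝⁿ : Wx ≤ w} is full-dimensional and bounded, and let F := P ∩ (ℤᵖ × ℝ^{n−p}). Then either there exists x⋄ ∈ F such that f(x⋄) − f_inf ≤ (1 − 1/(8(n+1)²))·(f_sup − f_inf), where f_inf and f_sup are the infimum and supremum of f on F, or there exist a nonzero vector d ∈ ℤⁿ with d_{p+1} = ⋯ = d_n = 0 and a scalar ρ ∈ ℚ such that {dᵀx : x ∈ P} ⊆ [ρ, ρ + 14(n+1)·p·2^{p(p−1)/4}]. -/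
open Matrix

/-- The objective function `f(x) = xᵀHx + hᵀx`. -/
noncomputable def qf {n : ℕ} (H : Matrix (Fin n) (Fin n) ℝ) (h : Fin n → ℝ)
    (x : Fin n → ℝ) : ℝ :=
  x ⬝ᵥ H.mulVec x + h ⬝ᵥ x


open Submodule Module Set

section helpers

variable {E : Type} [NormedAddCommGroup E]

lemma discrete_of_sep {L : Submodule ℤ E} {ε : ℝ}
    (hε : 0 < ε) (h : ∀ x ∈ L, ‖x‖ < ε → x = 0) : DiscreteTopology L := by
  rw [discreteTopology_iff_isOpen_singleton]
  intro x
  have hs : ({x} : Set L) = (Subtype.val ⁻¹' Metric.ball (x : E) ε : Set L) := by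
    ext y
    simp only [Set.mem_singleton_iff, Set.mem_preimage, Metric.mem_ball, dist_eq_norm]
    constructor
    · rintro rfl; simpa using hε
    · intro hy
      have hmem : ((y : E) - x) ∈ L := sub_mem y.2 x.2
      have := h _ hmem hy
      exact Subtype.ext (by rwa [sub_eq_zero] at this)
  rw [hs]
  exact Metric.isOpen_ball.preimage continuous_subtype_val

lemma sep_of_discrete (L : Submodule ℤ E) [DiscreteTopology L] :
    ∃ ε > 0, ∀ x ∈ L, ‖x‖ < ε → x = 0 := by
  have hop : IsOpen ({(0 : L)} : Set L) := isOpen_discrete _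
  rw [isOpen_induced_iff] at hop
  obtain ⟨U, hU, hUeq⟩ := hop
  have h0 : (0 : E) ∈ U := by
    have : (0 : L) ∈ (Subtype.val ⁻¹' U : Set L) := by rw [hUeq]; rfl
    simpa using this
  obtain ⟨ε, hε, hball⟩ := Metric.isOpen_iff.mp hU 0 h0
  refine ⟨ε, hε, fun x hx hnorm => ?_⟩
  have : (⟨x, hx⟩ : L) ∈ (Subtype.val ⁻¹' U : Set L) := by
    simp only [Set.mem_preimage]
    apply hball
    simpa [dist_eq_norm] using hnorm
  rw [hUeq] at this
  simpa using this

end helpers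

section dualbasis

variable {E : Type} [NormedAddCommGroup E] [InnerProductSpace ℝ E] [FiniteDimensional ℝ E]
variable {ι : Type} [Fintype ι] [DecidableEq ι]

omit [FiniteDimensional ℝ E] [Fintype ι] [DecidableEq ι] in
lemma eq_zero_of_inner_basis_zero (β : Basis ι ℝ E) {u : E}
    (h : ∀ i, (inner ℝ u (β i) : ℝ) = 0) : u = 0 := by
  have hall : ∀ v : E, (inner ℝ u v : ℝ) = 0 := by
    intro v
    have hv : v ∈ span ℝ (Set.range β) := by rw [β.span_eq]; trivial
    induction hv using Submodule.span_induction with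
    | mem x hx => obtain ⟨i, rfl⟩ := hx; exact h i
    | zero => simp
    | add x y _ _ hx hy => rw [inner_add_right, hx, hy, add_zero]
    | smul c x _ hx => rw [real_inner_smul_right, hx, mul_zero]
  have := hall u
  rwa [real_inner_self_eq_norm_sq, pow_eq_zero_iff (by norm_num), norm_eq_zero] at this

lemma exists_dual_basis (β : Basis ι ℝ E) :
    ∃ δ : ι → E, ∀ i j, (inner ℝ (δ i) (β j) : ℝ) = if i = j then 1 else 0 := by
  let f : E →ₗ[ℝ] (ι → ℝ) :=
    { toFun := fun u => fun j => (inner ℝ u (β j) : ℝ)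
      map_add' := by intro a b; funext j; simp [inner_add_left]
      map_smul' := by intro c a; funext j; simp [real_inner_smul_left] }
  have hinj : Function.Injective f := by
    rw [← LinearMap.ker_eq_bot, eq_bot_iff]
    rintro u hu
    have : ∀ j, (inner ℝ u (β j) : ℝ) = 0 := fun j => congrFun (LinearMap.mem_ker.mp hu) j
    simpa using eq_zero_of_inner_basis_zero β this
  have hrank : finrank ℝ E = finrank ℝ (ι → ℝ) := by
    rw [finrank_eq_card_basis β]; simp
  let e := LinearMap.linearEquivOfInjective f hinj hrank
  refine ⟨fun i => e.symm (Pi.single i 1), fun i j => ?_⟩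
  have h1 : f (e.symm (Pi.single i 1)) = Pi.single i 1 := by
    have : e (e.symm (Pi.single i 1)) = Pi.single i 1 := e.apply_symm_apply _
    exact this
  have := congrFun h1 j
  simp only [f, LinearMap.coe_mk, AddHom.coe_mk] at this
  rw [this, Pi.single_apply]
  simp [eq_comm]

end dualbasis

set_option maxHeartbeats 3000000 in
theorem transfer : ∀ (N : ℕ) (E : Type) [NormedAddCommGroup E] [InnerProductSpace ℝ E]
    [FiniteDimensional ℝ E] (L : Submodule ℤ E), ∀ (_ : DiscreteTopology L) (_ : IsZLattice ℝ L),
    finrank ℝ E = N → ∀ (lam : ℝ), 0 < lam →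
    (∀ u : E, u ≠ 0 → (∀ x ∈ L, ∃ z : ℤ, (inner ℝ u x : ℝ) = (z : ℝ)) → lam ≤ ‖u‖) →
    ∀ t : E, ∃ v ∈ L, ‖t - v‖ ^ 2 * lam ^ 2 ≤ ((4 / 3 : ℝ) ^ N - 3 / 4) := by
  intro N
  induction N with
  | zero =>
      intro E _ _ _ L _ _ hN lam hlam hdual t
      have : Subsingleton E := finrank_zero_iff.mp hN
      refine ⟨0, zero_mem L, ?_⟩
      have ht : t - 0 = 0 := Subsingleton.elim _ _
      rw [ht]
      norm_num
  | succ N ih =>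
      intro E _ _ _ L _ _ hN lam hlam hdual t
      classical
      haveI : Module.Finite ℤ L := ZLattice.module_finite ℝ L
      haveI : Module.Free ℤ L := ZLattice.module_free ℝ L
      set ι := Module.Free.ChooseBasisIndex ℤ L with hι
      let b : Basis ι ℤ L := Module.Free.chooseBasis ℤ L
      set β : Basis ι ℝ E := Basis.ofZLatticeBasis ℝ L b with hβ
      have hspan : span ℤ (Set.range β) = L := Basis.ofZLatticeBasis_span ℝ L b
      have hβL : ∀ i, β i ∈ L := fun i => by
        rw [← hspan]; exact subset_span ⟨i, rfl⟩
      have hcard : Fintype.card ι = N + 1 := by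
        rw [← finrank_eq_card_basis β, hN]
      haveI : Nonempty ι := by
        rw [← Fintype.card_pos_iff, hcard]; omega
      -- integer inner products extend from basis to lattice
      have hIntL : ∀ u : E, (∀ i, ∃ z : ℤ, (inner ℝ u (β i) : ℝ) = (z : ℝ)) →
          ∀ x ∈ L, ∃ z : ℤ, (inner ℝ u x : ℝ) = (z : ℝ) := by
        intro u hu x hx
        rw [← hspan] at hx
        induction hx using Submodule.span_induction with
        | mem y hy => obtain ⟨i, rfl⟩ := hy; exact hu i
        | zero => exact ⟨0, by simp⟩
        | add y z _ _ hy hz =>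
            obtain ⟨a, ha⟩ := hy; obtain ⟨c, hc⟩ := hz
            exact ⟨a + c, by rw [inner_add_right, ha, hc]; push_cast; ring⟩
        | smul c y _ hy =>
            obtain ⟨a, ha⟩ := hy
            refine ⟨c * a, ?_⟩
            rw [← Int.cast_smul_eq_zsmul ℝ c y, real_inner_smul_right, ha]
            push_cast; ring
      obtain ⟨δ, hδ⟩ := exists_dual_basis β
      set D : Set E := {u | ∀ x ∈ L, ∃ z : ℤ, (inner ℝ u x : ℝ) = (z : ℝ)} with hD
      obtain ⟨i₀⟩ := ‹Nonempty ι›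
      have hu₁D : δ i₀ ∈ D := hIntL _ (fun i => ⟨if i₀ = i then 1 else 0, by rw [hδ]; split <;> simp⟩)
      have hu₁0 : δ i₀ ≠ 0 := by
        intro h0
        have := hδ i₀ i₀
        rw [h0] at this
        simp at this
      set A : Set E := {v | v ∈ D ∧ v ≠ 0 ∧ ‖v‖ ≤ ‖δ i₀‖} with hA
      have hAne : A.Nonempty := ⟨δ i₀, hu₁D, hu₁0, le_refl _⟩
      have hAfin : A.Finite := by
        set φ : E → (ι → ℤ) := fun v i => round (inner ℝ v (β i) : ℝ) with hφ
        have hφint : ∀ v ∈ D, ∀ i, ((φ v i : ℤ) : ℝ) = (inner ℝ v (β i) : ℝ) := by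
          intro v hv i
          obtain ⟨z, hz⟩ := hv (β i) (hβL i)
          rw [hφ]
          simp only
          rw [hz, round_intCast]
        have hinj : Set.InjOn φ A := by
          intro v hv w hw heq
          have hzero : ∀ i, (inner ℝ (v - w) (β i) : ℝ) = 0 := by
            intro i
            rw [inner_sub_left, ← hφint v hv.1 i, ← hφint w hw.1 i, heq]
            ring
          have := eq_zero_of_inner_basis_zero β hzero
          exact sub_eq_zero.mp this
        have himage : φ '' A ⊆ Set.pi Set.univ
            (fun i => Set.Icc (-(⌈‖δ i₀‖ * ‖β i‖⌉)) ⌈‖δ i₀‖ * ‖β i‖⌉) := by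
          rintro _ ⟨v, hv, rfl⟩ i _
          have h1 : |(inner ℝ v (β i) : ℝ)| ≤ ‖δ i₀‖ * ‖β i‖ :=
            le_trans (abs_real_inner_le_norm v (β i))
              (mul_le_mul_of_nonneg_right hv.2.2 (norm_nonneg _))
          have h2 : |((φ v i : ℤ) : ℝ)| ≤ (⌈‖δ i₀‖ * ‖β i‖⌉ : ℝ) := by
            rw [hφint v hv.1 i]
            exact le_trans h1 (Int.le_ceil _)
          have h3 : |φ v i| ≤ ⌈‖δ i₀‖ * ‖β i‖⌉ := by exact_mod_cast h2
          rw [Set.mem_Icc]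
          rw [abs_le] at h3
          exact h3
        exact Set.Finite.of_finite_image
          (Set.Finite.subset (Set.Finite.pi (fun i => Set.finite_Icc _ _)) himage) hinj
      obtain ⟨u, huA, humin⟩ := Set.exists_min_image A (fun v => ‖v‖) hAfin hAne
      obtain ⟨huD, hu0, hule⟩ := huA
      have humin' : ∀ v ∈ D, v ≠ 0 → ‖u‖ ≤ ‖v‖ := by
        intro v hv hv0
        by_cases hle : ‖v‖ ≤ ‖δ i₀‖
        · exact humin v ⟨hv, hv0, hle⟩
        · exact le_trans hule (le_of_not_ge hle)
      have hupos : 0 < ‖u‖ := norm_pos_iff.mpr hu0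
      have hlamu : lam ≤ ‖u‖ := hdual u hu0 huD
      -- the integers m i and the Bezout element xb
      choose mz hmz using fun i => huD (β i) (hβL i)
      have hmne : ∃ i, mz i ≠ 0 := by
        by_contra hall
        push_neg at hall
        refine hu0 (eq_zero_of_inner_basis_zero β (fun i => ?_))
        rw [hmz i, hall i]; simp
      obtain ⟨aa, haa⟩ : ∃ aa : ι → ℤ, ∑ i, aa i * mz i = 1 := by
        set J : Ideal ℤ := Ideal.span (Set.range mz) with hJ
        set g : ℤ := Submodule.IsPrincipal.generator J with hg
        have hgJ : g ∈ J := Submodule.IsPrincipal.generator_mem J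
        have hdvd : ∀ i, g ∣ mz i := fun i => by
          rw [hg, ← Submodule.IsPrincipal.mem_iff_generator_dvd]
          exact Ideal.subset_span ⟨i, rfl⟩
        rw [hJ, Ideal.span, mem_span_range_iff_exists_fun] at hgJ
        obtain ⟨a, ha⟩ := hgJ
        simp only [smul_eq_mul] at ha
        have hg0 : g ≠ 0 := by
          intro hgz
          obtain ⟨i, hi⟩ := hmne
          exact hi (zero_dvd_iff.mp (hgz ▸ hdvd i))
        have hg1 : g = 1 ∨ g = -1 := by
          by_contra hgg
          push_neg at hgg
          have h2 : (2 : ℝ) ≤ |(g : ℝ)| := by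
            have h2' : 2 ≤ |g| := by rw [le_abs]; omega
            calc (2:ℝ) = ((2:ℤ):ℝ) := by norm_num
            _ ≤ ((|g|:ℤ):ℝ) := by exact_mod_cast h2'
            _ = |(g:ℝ)| := by push_cast; rfl
          have hginv : ((g:ℝ))⁻¹ ≠ 0 := inv_ne_zero (by exact_mod_cast hg0)
          have hu'D : ((g:ℝ))⁻¹ • u ∈ D := hIntL _ (fun i => by
            obtain ⟨k, hk⟩ := hdvd i
            refine ⟨k, ?_⟩
            rw [real_inner_smul_left, hmz i, hk]
            have : ((g:ℝ)) ≠ 0 := by exact_mod_cast hg0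
            push_cast
            field_simp)
          have hu'0 : ((g:ℝ))⁻¹ • u ≠ 0 := smul_ne_zero hginv hu0
          have hmin2 := humin' _ hu'D hu'0
          rw [norm_smul, norm_inv, Real.norm_eq_abs] at hmin2
          have habs : 0 < |(g:ℝ)| := by linarith
          have hkey : |(g:ℝ)| * ‖u‖ ≤ ‖u‖ := by
            calc |(g:ℝ)| * ‖u‖ ≤ |(g:ℝ)| * (|(g:ℝ)|⁻¹ * ‖u‖) := by nlinarith
            _ = ‖u‖ := by field_simp
          nlinarith
        rcases hg1 with h1 | h1
        · exact ⟨a, by rw [ha, h1]⟩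
        · refine ⟨fun i => -a i, ?_⟩
          have hneg : -(∑ i, a i * mz i) = 1 := by rw [ha, h1]; ring
          rw [← hneg, ← Finset.sum_neg_distrib]
          exact Finset.sum_congr rfl (fun i _ => by ring)
      set xb : E := ∑ i, (aa i : ℝ) • β i with hxb
      have hxbL : xb ∈ L := by
        apply Submodule.sum_mem
        intro i _
        rw [Int.cast_smul_eq_zsmul ℝ]
        exact Submodule.smul_mem _ _ (hβL i)
      have hxb1 : (inner ℝ u xb : ℝ) = 1 := by
        rw [hxb, inner_sum]
        have : ∀ i ∈ Finset.univ, (inner ℝ u ((aa i : ℝ) • β i) : ℝ) = (aa i : ℝ) * (mz i : ℝ) := by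
          intro i _
          rw [real_inner_smul_right, hmz i]
        rw [Finset.sum_congr rfl this]
        push_cast [← haa]
        norm_cast
      -- the sublattice in the orthogonal complement
      set E' : Submodule ℝ E := (span ℝ {u})ᗮ with hE'
      set L₀ : Submodule ℤ E' := Submodule.comap ((E'.subtype).restrictScalars ℤ) L with hL₀
      have hmemL₀ : ∀ y : E', (y ∈ L₀ ↔ (y : E) ∈ L) := fun y => Iff.rfl
      obtain ⟨ε, hε, hsep⟩ := sep_of_discrete L
      haveI hdisc : DiscreteTopology L₀ := by
        refine discrete_of_sep hε ?_
        intro y hy hynorm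
        have hcoe : (y : E) = 0 := by
          refine hsep _ ((hmemL₀ y).mp hy) ?_
          rwa [← Submodule.coe_norm]
        exact Subtype.ext hcoe
      haveI hZL : IsZLattice ℝ L₀ := by
        refine ⟨?_⟩
        rw [eq_top_iff]
        rintro y -
        have hyE : (y : E) ∈ (span ℝ {u})ᗮ := y.2
        set c : ι → ℝ := fun i => β.repr (y : E) i with hc
        have hysum : (y : E) = ∑ i, c i • β i := (β.sum_repr (y : E)).symm
        have hinner0 : (inner ℝ u (y : E) : ℝ) = 0 :=
          Submodule.mem_orthogonal_singleton_iff_inner_right.mp hyE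
        have hcm : ∑ i, c i * (mz i : ℝ) = 0 := by
          have hcong := congrArg (fun w => (inner ℝ u w : ℝ)) hysum
          rw [← hinner0, hcong, inner_sum]
          exact Finset.sum_congr rfl (fun i _ => by rw [real_inner_smul_right, hmz i])
        set β' : ι → E := fun i => β i - (mz i : ℝ) • xb with hβ'
        have hβ'E' : ∀ i, β' i ∈ E' := fun i => by
          rw [hE', Submodule.mem_orthogonal_singleton_iff_inner_right]
          rw [hβ']
          simp only
          rw [inner_sub_right, real_inner_smul_right, hmz i, hxb1]
          ring
        have hβ'L : ∀ i, β' i ∈ L := fun i => by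
          refine Submodule.sub_mem _ (hβL i) ?_
          rw [Int.cast_smul_eq_zsmul ℝ]
          exact Submodule.smul_mem _ _ hxbL
        have hyrep : (y : E) = ∑ i, c i • β' i := by
          rw [hβ']
          simp only [smul_sub]
          rw [Finset.sum_sub_distrib, ← hysum]
          have hxs : ∑ i, c i • (mz i : ℝ) • xb = (∑ i, c i * (mz i : ℝ)) • xb := by
            rw [Finset.sum_smul]
            exact Finset.sum_congr rfl (fun i _ => by rw [smul_smul])
          rw [hxs, hcm, zero_smul, sub_zero]
        have hyrep' : y = ∑ i, c i • (⟨β' i, hβ'E' i⟩ : E') := by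
          apply Subtype.ext
          rw [hyrep]
          simp
        rw [hyrep']
        refine Submodule.sum_mem _ (fun i _ => Submodule.smul_mem _ _ ?_)
        exact Submodule.subset_span ((hmemL₀ _).mpr (hβ'L i))
      have hrk : finrank ℝ E' = N := by
        have hh := Submodule.finrank_add_finrank_orthogonal (K := span ℝ ({u} : Set E))
        rw [finrank_span_singleton hu0, hN] at hh
        rw [hE']
        omega
      -- dual vectors of the sublattice are not much shorter
      set lam' : ℝ := Real.sqrt 3 / 2 * ‖u‖ with hlam'
      have hs3 : (0:ℝ) < Real.sqrt 3 := Real.sqrt_pos.mpr (by norm_num)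
      have hlam'pos : 0 < lam' := by
        rw [hlam']
        positivity
      have hlam'sq : lam' ^ 2 = 3 / 4 * ‖u‖ ^ 2 := by
        rw [hlam', mul_pow, div_pow, Real.sq_sqrt (by norm_num : (3:ℝ) ≥ 0)]
        ring
      have hdual' : ∀ z : E', z ≠ 0 → (∀ x ∈ L₀, ∃ k : ℤ, (inner ℝ z x : ℝ) = (k : ℝ)) →
          lam' ≤ ‖z‖ := by
        intro z hz hzD
        have hzu : (inner ℝ u (z : E) : ℝ) = 0 :=
          Submodule.mem_orthogonal_singleton_iff_inner_right.mp z.2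
        set r : ℝ := inner ℝ (z : E) xb with hr
        set α : ℝ := (round r : ℝ) - r with hα
        have hαle : |α| ≤ 1 / 2 := by
          rw [hα, abs_sub_comm]
          exact abs_sub_round r
        set wv : E := (z : E) + α • u with hwv
        have hwD : wv ∈ D := by
          intro x hx
          obtain ⟨zx, hzx⟩ := huD x hx
          set x₀ : E := x - (zx : ℝ) • xb with hx₀
          have hx₀L : x₀ ∈ L := by
            refine Submodule.sub_mem _ hx ?_
            rw [Int.cast_smul_eq_zsmul ℝ]
            exact Submodule.smul_mem _ _ hxbL
          have hx₀E' : x₀ ∈ E' := by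
            rw [hE', Submodule.mem_orthogonal_singleton_iff_inner_right, hx₀]
            rw [inner_sub_right, real_inner_smul_right, hxb1, hzx]
            ring
          obtain ⟨k₀, hk₀⟩ := hzD ⟨x₀, hx₀E'⟩ ((hmemL₀ _).mpr hx₀L)
          rw [Submodule.coe_inner] at hk₀
          refine ⟨k₀ + zx * round r, ?_⟩
          have hxdec : x = x₀ + (zx : ℝ) • xb := by rw [hx₀]; abel
          have hux₀ : (inner ℝ u x₀ : ℝ) = 0 :=
            Submodule.mem_orthogonal_singleton_iff_inner_right.mp hx₀E'
          have h1 : (inner ℝ wv x₀ : ℝ) = (k₀ : ℝ) := by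
            rw [hwv, inner_add_left, real_inner_smul_left, hux₀, hk₀]
            ring
          have h2 : (inner ℝ wv xb : ℝ) = (round r : ℝ) := by
            rw [hwv, inner_add_left, real_inner_smul_left, hxb1, ← hr, hα]
            ring
          rw [hxdec, inner_add_right, h1, real_inner_smul_right, h2]
          push_cast
          ring
        have hz0 : (z : E) ≠ 0 := fun hc => hz (Subtype.ext hc)
        have hznorm : 0 < ‖(z : E)‖ := norm_pos_iff.mpr hz0
        have hnormw : ‖wv‖ ^ 2 = ‖(z : E)‖ ^ 2 + α ^ 2 * ‖u‖ ^ 2 := by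
          rw [hwv, norm_add_sq_real, real_inner_smul_right, real_inner_comm, hzu, norm_smul]
          rw [Real.norm_eq_abs, mul_pow, sq_abs]
          ring
        have hw0 : wv ≠ 0 := by
          intro hc
          rw [hc] at hnormw
          simp only [norm_zero] at hnormw
          nlinarith
        have hle := humin' wv hwD hw0
        have hzE : ‖z‖ = ‖(z : E)‖ := Submodule.coe_norm z
        rw [hzE]
        clear_value wv α r
        have hαm : |α| * |α| ≤ (1/2) * (1/2) := mul_le_mul hαle hαle (abs_nonneg α) (by norm_num)
        have hα2 : α ^ 2 ≤ 1 / 4 := by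
          calc α ^ 2 = |α| * |α| := by rw [← sq_abs]; ring
          _ ≤ 1 / 2 * (1 / 2) := hαm
          _ = 1 / 4 := by norm_num
        have h1 : ‖u‖ ^ 2 ≤ ‖wv‖ ^ 2 := pow_le_pow_left₀ (norm_nonneg u) hle 2
        have h3 : α ^ 2 * ‖u‖ ^ 2 ≤ 1 / 4 * ‖u‖ ^ 2 :=
          mul_le_mul_of_nonneg_right hα2 (sq_nonneg _)
        have h2 : lam' ^ 2 ≤ ‖(z : E)‖ ^ 2 := by
          rw [hlam'sq]
          linarith
        calc lam' = Real.sqrt (lam' ^ 2) := (Real.sqrt_sq hlam'pos.le).symm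
        _ ≤ Real.sqrt (‖(z : E)‖ ^ 2) := Real.sqrt_le_sqrt h2
        _ = ‖(z : E)‖ := Real.sqrt_sq (norm_nonneg _)
      -- apply the induction hypothesis
      set mt : ℤ := round (inner ℝ u t : ℝ) with hmt
      set θ : ℝ := (inner ℝ u t : ℝ) - (mt : ℝ) with hθdef
      have hθle : |θ| ≤ 1 / 2 := abs_sub_round _
      set s : E := t - (mt : ℝ) • xb with hsdef
      have hsinner : (inner ℝ u s : ℝ) = θ := by
        rw [hsdef, inner_sub_right, real_inner_smul_right, hxb1, hθdef]
        ring
      set s₀ : E := s - (θ / ‖u‖ ^ 2) • u with hs₀def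
      have hs₀E' : s₀ ∈ E' := by
        rw [hE', Submodule.mem_orthogonal_singleton_iff_inner_right, hs₀def, inner_sub_right,
          real_inner_smul_right, hsinner, real_inner_self_eq_norm_sq]
        field_simp
        ring
      obtain ⟨v₂, hv₂L, hv₂⟩ := ih E' L₀ hdisc hZL hrk lam' hlam'pos hdual' ⟨s₀, hs₀E'⟩
      refine ⟨(mt : ℝ) • xb + (v₂ : E), ?_, ?_⟩
      · refine Submodule.add_mem _ ?_ ((hmemL₀ _).mp hv₂L)
        rw [Int.cast_smul_eq_zsmul ℝ]
        exact Submodule.smul_mem _ _ hxbL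
      have hv₂E' : (v₂ : E) ∈ E' := by
        exact Submodule.coe_mem (show ↥E' from v₂)
      have hdiffeq : t - ((mt : ℝ) • xb + (v₂ : E)) = (s₀ - (v₂ : E)) + (θ / ‖u‖ ^ 2) • u := by
        rw [hs₀def, hsdef]
        abel
      have hperp : (inner ℝ (s₀ - (v₂ : E)) ((θ / ‖u‖ ^ 2) • u) : ℝ) = 0 := by
        rw [real_inner_smul_right]
        have hm : s₀ - (v₂ : E) ∈ E' := Submodule.sub_mem _ hs₀E' hv₂E'
        have h0 : (inner ℝ u (s₀ - (v₂ : E)) : ℝ) = 0 :=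
          Submodule.mem_orthogonal_singleton_iff_inner_right.mp hm
        rw [real_inner_comm, h0, mul_zero]
      have hsplit : ‖t - ((mt : ℝ) • xb + (v₂ : E))‖ ^ 2
          = ‖s₀ - (v₂ : E)‖ ^ 2 + θ ^ 2 / ‖u‖ ^ 2 := by
        rw [hdiffeq, norm_add_sq_real, hperp, norm_smul, Real.norm_eq_abs, mul_pow, sq_abs,
          div_pow]
        have hne : ‖u‖ ^ 2 ≠ 0 := by positivity
        field_simp
        ring
      have hE'normeq : ‖(⟨s₀, hs₀E'⟩ : E') - v₂‖ = ‖s₀ - (v₂ : E)‖ := by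
        rw [Submodule.coe_norm]
        norm_cast
      rw [hE'normeq] at hv₂
      have hfin : ‖t - ((mt : ℝ) • xb + (v₂ : E))‖ ^ 2 * lam ^ 2
          ≤ ‖t - ((mt : ℝ) • xb + (v₂ : E))‖ ^ 2 * ‖u‖ ^ 2 := by
        have := pow_le_pow_left₀ hlam.le hlamu 2
        exact mul_le_mul_of_nonneg_left this (sq_nonneg _)
      refine le_trans hfin ?_
      rw [hsplit]
      have hune : ‖u‖ ^ 2 ≠ 0 := by positivity
      have hterm2 : (‖s₀ - (v₂ : E)‖ ^ 2 + θ ^ 2 / ‖u‖ ^ 2) * ‖u‖ ^ 2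
          = ‖s₀ - (v₂ : E)‖ ^ 2 * ‖u‖ ^ 2 + θ ^ 2 := by
        field_simp
      rw [hterm2]
      have hkey : ‖s₀ - (v₂ : E)‖ ^ 2 * ‖u‖ ^ 2 ≤ (4 / 3) * ((4 / 3 : ℝ) ^ N - 3 / 4) := by
        have h43 : ‖s₀ - (v₂ : E)‖ ^ 2 * ‖u‖ ^ 2
            = (4 / 3) * (‖s₀ - (v₂ : E)‖ ^ 2 * lam' ^ 2) := by
          rw [hlam'sq]
          ring
        rw [h43]
        linarith
      have hθsq : θ ^ 2 ≤ 1 / 4 := by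
        have hθm : |θ| * |θ| ≤ (1/2) * (1/2) := mul_le_mul hθle hθle (abs_nonneg θ) (by norm_num)
        calc θ ^ 2 = |θ| * |θ| := by rw [← sq_abs]; ring
        _ ≤ 1 / 2 * (1 / 2) := hθm
        _ = 1 / 4 := by norm_num
      have hpow : (4 / 3 : ℝ) ^ (N + 1) = (4 / 3) * (4 / 3 : ℝ) ^ N := by
        rw [pow_succ]
        ring
      rw [hpow]
      linarith



lemma qf_continuous {n : ℕ} (H : Matrix (Fin n) (Fin n) ℝ) (h : Fin n → ℝ) :
    Continuous (qf H h) := by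
  unfold qf dotProduct Matrix.mulVec
  apply Continuous.add
  · apply continuous_finset_sum
    intro i _
    apply Continuous.mul (continuous_apply i)
    apply continuous_finset_sum
    intro j _
    exact continuous_const.mul (continuous_apply j)
  · apply continuous_finset_sum
    intro i _
    exact continuous_const.mul (continuous_apply i)

lemma mixed_closed (n p : ℕ) : IsClosed (mixedIntSet n p) := by
  have heq : mixedIntSet n p = ⋂ (i : Fin n), ⋂ (_ : (i : ℕ) < p),
      (fun x : Fin n → ℝ => x i) ⁻¹' (Set.range ((↑) : ℤ → ℝ)) := by
    ext x
    simp [mixedIntSet, eq_comm]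
  rw [heq]
  refine isClosed_iInter fun i => isClosed_iInter fun _ => IsClosed.preimage (continuous_apply i) ?_
  exact Int.isClosedEmbedding_coe_real.isClosed_range

lemma left_branch {n : ℕ} (P : Set (Fin n → ℝ)) (hcl : IsClosed P)
    (hbdd : Bornology.IsBounded P) (mix : Set (Fin n → ℝ)) (hmix : IsClosed mix)
    (f : (Fin n → ℝ) → ℝ) (hf : Continuous f) (hne : (P ∩ mix).Nonempty)
    (coef : ℝ) (hcoef : 0 ≤ coef) :
    ∃ x ∈ P ∩ mix, f x - sInf (f '' (P ∩ mix)) ≤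
      coef * (sSup (f '' (P ∩ mix)) - sInf (f '' (P ∩ mix))) := by
  have hcpt : IsCompact (P ∩ mix) :=
    Metric.isCompact_of_isClosed_isBounded (hcl.inter hmix) (hbdd.subset Set.inter_subset_left)
  have himg : IsCompact (f '' (P ∩ mix)) := hcpt.image hf
  obtain ⟨x₀, hx₀, hmin⟩ := hcpt.exists_isMinOn hne hf.continuousOn
  have hinf : sInf (f '' (P ∩ mix)) = f x₀ := by
    apply le_antisymm
    · exact csInf_le himg.bddBelow ⟨x₀, hx₀, rfl⟩
    · refine le_csInf ⟨f x₀, x₀, hx₀, rfl⟩ ?_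
      rintro b ⟨y, hy, rfl⟩
      exact hmin hy
  refine ⟨x₀, hx₀, ?_⟩
  rw [hinf, sub_self]
  apply mul_nonneg hcoef
  rw [sub_nonneg]
  exact le_csSup himg.bddAbove ⟨x₀, hx₀, rfl⟩

lemma key_arith (n p : ℕ) (hp1 : 1 ≤ p) (hpn : p ≤ n) :
    4 * (p:ℝ) * Real.sqrt ((4/3:ℝ)^p) * Real.sqrt p + 1 ≤
      14 * ((n:ℝ)+1) * p * (2:ℝ) ^ (((p:ℝ) * ((p:ℝ)-1)) / 4) := by
  have hp1R : (1:ℝ) ≤ (p:ℝ) := by exact_mod_cast hp1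
  have hpn1 : (p:ℝ) + 1 ≤ (n:ℝ) + 1 := by
    have : (p:ℝ) ≤ (n:ℝ) := by exact_mod_cast hpn
    linarith
  set X : ℝ := (2:ℝ) ^ (((p:ℝ) * ((p:ℝ)-1)) / 4) with hX
  have hXpos : 0 < X := Real.rpow_pos_of_pos (by norm_num) _
  have hX1 : 1 ≤ X := by
    rw [hX]
    apply Real.one_le_rpow (by norm_num)
    have : 0 ≤ (p:ℝ) * ((p:ℝ)-1) := mul_nonneg (by linarith) (by linarith)
    linarith
  set R : ℝ := 14 * ((n:ℝ)+1) * p * X with hR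
  have hR2 : (2:ℝ) ≤ R := by
    have h2 : (28:ℝ) ≤ 14 * ((n:ℝ)+1) * p := by nlinarith
    calc (2:ℝ) ≤ 28 * 1 := by norm_num
    _ ≤ (14 * ((n:ℝ)+1) * (p:ℝ)) * X := mul_le_mul h2 hX1 (by norm_num) (by linarith)
    _ = R := by rw [hR]
  -- main squared estimate
  have hXsq : X ^ 2 = (2:ℝ) ^ (((p:ℝ) * ((p:ℝ)-1)) / 2) := by
    rw [hX, ← Real.rpow_natCast ((2:ℝ) ^ _) 2, ← Real.rpow_mul (by norm_num)]
    norm_num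
    congr 1
    ring
  have h43X : 16 * ((4/3:ℝ)^p) ≤ 49 * X ^ 2 := by
    rcases eq_or_lt_of_le hp1 with hp1' | hp2
    · -- p = 1
      have : p = 1 := hp1'.symm
      subst this
      have : X = 1 := by
        rw [hX]
        norm_num
      rw [this]
      norm_num
    · -- p ≥ 2
      have hp2' : (2:ℝ) ≤ (p:ℝ) := by exact_mod_cast hp2
      have hsqrt2 : (4/3:ℝ) ≤ Real.sqrt 2 := by
        have h169 : ((4:ℝ)/3)^2 ≤ 2 := by norm_num
        nlinarith [Real.sq_sqrt (by norm_num : (0:ℝ) ≤ 2), Real.sqrt_nonneg 2,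
          sq_nonneg ((4:ℝ)/3 - Real.sqrt 2)]
      have h2half : ((4:ℝ)/3)^p ≤ (2:ℝ) ^ ((p:ℝ)/2) := by
        have ha : ((4:ℝ)/3)^p ≤ (Real.sqrt 2)^p :=
          pow_le_pow_left₀ (by norm_num) hsqrt2 p
        have hb : (Real.sqrt 2)^p = (2:ℝ) ^ ((p:ℝ)/2) := by
          rw [Real.sqrt_eq_rpow, ← Real.rpow_natCast ((2:ℝ)^((1:ℝ)/2)) p,
            ← Real.rpow_mul (by norm_num)]
          ring_nf
        rw [← hb]
        exact ha
      have hmono : (2:ℝ) ^ ((p:ℝ)/2) ≤ X ^ 2 := by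
        rw [hXsq]
        apply Real.rpow_le_rpow_of_exponent_le (by norm_num)
        nlinarith
      nlinarith [hXpos]
  -- the left-hand side bound
  have hnn : 0 ≤ 4*(p:ℝ)*Real.sqrt ((4/3:ℝ)^p)*Real.sqrt p := by positivity
  have hL : 4*(p:ℝ)*Real.sqrt ((4/3:ℝ)^p)*Real.sqrt p ≤ R/2 := by
    have hsq : (4*(p:ℝ)*Real.sqrt ((4/3:ℝ)^p)*Real.sqrt p)^2 = 16*(p:ℝ)^2*((4/3:ℝ)^p)*p := by
      rw [mul_pow, mul_pow, mul_pow, Real.sq_sqrt (by positivity),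
        Real.sq_sqrt (by positivity : (0:ℝ) ≤ (p:ℝ))]
      ring
    have hnp : (p:ℝ) ≤ ((n:ℝ)+1)^2 := by nlinarith
    have hcmp : (4*(p:ℝ)*Real.sqrt ((4/3:ℝ)^p)*Real.sqrt p)^2 ≤ (R/2)^2 := by
      rw [hsq]
      have hRsq : (R/2)^2 = 49*((n:ℝ)+1)^2*(p:ℝ)^2*X^2 := by rw [hR]; ring
      rw [hRsq]
      calc 16*(p:ℝ)^2*((4/3:ℝ)^p)*p = (16*((4/3:ℝ)^p))*(p:ℝ)^3 := by ring
      _ ≤ (49*X^2)*(p:ℝ)^3 := mul_le_mul_of_nonneg_right h43X (by positivity)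
      _ ≤ (49*X^2)*(((n:ℝ)+1)^2*(p:ℝ)^2) := by
          apply mul_le_mul_of_nonneg_left ?_ (by positivity)
          calc (p:ℝ)^3 = (p:ℝ)*(p:ℝ)^2 := by ring
          _ ≤ ((n:ℝ)+1)^2*(p:ℝ)^2 := mul_le_mul_of_nonneg_right hnp (by positivity)
      _ = 49*((n:ℝ)+1)^2*(p:ℝ)^2*X^2 := by ring
    have hR0 : 0 ≤ R/2 := by linarith
    calc 4*(p:ℝ)*Real.sqrt ((4/3:ℝ)^p)*Real.sqrt p
        = Real.sqrt ((4*(p:ℝ)*Real.sqrt ((4/3:ℝ)^p)*Real.sqrt p)^2) := (Real.sqrt_sq hnn).symm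
    _ ≤ Real.sqrt ((R/2)^2) := Real.sqrt_le_sqrt hcmp
    _ = R/2 := Real.sqrt_sq hR0
  have : R = 14 * ((n:ℝ)+1) * p * X := hR
  linarith


lemma euclid_abs_le_norm {p : ℕ} (v : EuclideanSpace ℝ (Fin p)) (i : Fin p) : |v i| ≤ ‖v‖ := by
  rw [EuclideanSpace.norm_eq, ← Real.sqrt_sq_eq_abs]
  apply Real.sqrt_le_sqrt
  have := Finset.single_le_sum (f := fun j => ‖v j‖ ^ 2) (fun j _ => sq_nonneg _)
    (Finset.mem_univ i)
  simpa [Real.norm_eq_abs, sq_abs] using this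

section flat

variable {n p : ℕ}


set_option maxHeartbeats 2000000 in
lemma flat_of_no_mixed_point (hp : p ≤ n) (hp1 : 1 ≤ p)
    (P : Set (Fin n → ℝ)) (hPconv : Convex ℝ P) (hPcl : IsClosed P)
    (hPb : Bornology.IsBounded P) (hPint : (interior P).Nonempty)
    (hempty : P ∩ mixedIntSet n p = ∅) :
    ∃ (d : Fin n → ℤ) (ρ : ℚ), d ≠ 0 ∧ (∀ i : Fin n, p ≤ (i : ℕ) → d i = 0) ∧
      ∀ x ∈ P, (ρ:ℝ) ≤ (fun i => ((d i : ℤ) : ℝ)) ⬝ᵥ x ∧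
        (fun i => ((d i : ℤ) : ℝ)) ⬝ᵥ x ≤
          (ρ:ℝ) + 14 * ((n:ℝ)+1) * p * (2:ℝ) ^ (((p:ℝ) * ((p:ℝ)-1)) / 4) := by
  classical
  have hpPos : (0:ℝ) < p := by exact_mod_cast hp1
  have hp1R : (1:ℝ) ≤ (p:ℝ) := by exact_mod_cast hp1
  -- the projection onto the first p coordinates
  set π : (Fin n → ℝ) → (Fin p → ℝ) := fun x j => x (Fin.castLE hp j) with hπ
  have hπcont : Continuous π := continuous_pi (fun j => continuous_apply _)
  set Q : Set (Fin p → ℝ) := π '' P with hQ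
  have hPcpt : IsCompact P := Metric.isCompact_of_isClosed_isBounded hPcl hPb
  have hQcpt : IsCompact Q := hPcpt.image hπcont
  have hQconv : Convex ℝ Q := by
    have heq : Q = (LinearMap.funLeft ℝ ℝ (Fin.castLE hp)) '' P := rfl
    rw [heq]
    exact hPconv.linear_image _
  -- a small ball inside Q
  obtain ⟨x₀, hx₀⟩ := hPint
  obtain ⟨ε, hε, hball⟩ : ∃ ε > 0, Metric.ball (π x₀) ε ⊆ Q := by
    have hsurj : Function.Surjective (LinearMap.funLeft ℝ ℝ (Fin.castLE hp)) :=
      LinearMap.funLeft_surjective_of_injective ℝ ℝ _ (Fin.castLE_injective hp)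
    set πL := LinearMap.toContinuousLinearMap (LinearMap.funLeft ℝ ℝ (Fin.castLE hp)) with hπL
    have hopen : IsOpenMap πL := πL.isOpenMap (by exact hsurj)
    have hUopen : IsOpen (πL '' interior P) := hopen _ isOpen_interior
    have hmem : π x₀ ∈ πL '' interior P := ⟨x₀, hx₀, rfl⟩
    obtain ⟨ε, hε, hball⟩ := Metric.isOpen_iff.mp hUopen _ hmem
    refine ⟨ε, hε, hball.trans ?_⟩
    intro y hy
    obtain ⟨z, hz, rfl⟩ := hy
    exact ⟨z, interior_subset hz, rfl⟩
  -- a maximal-volume simplex in Q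
  set QT : Set ((Fin p → ℝ) × (Fin p → (Fin p → ℝ))) :=
    Q ×ˢ (Set.pi Set.univ (fun _ : Fin p => Q)) with hQT
  have hQTcpt : IsCompact QT := hQcpt.prod (isCompact_univ_pi (fun _ => hQcpt))
  set φ : ((Fin p → ℝ) × (Fin p → (Fin p → ℝ))) → ℝ :=
    fun vv => |Matrix.det (Matrix.of (fun i j => vv.2 j i - vv.1 i))| with hφ
  have hφcont : Continuous φ := by
    apply Continuous.abs
    apply Continuous.matrix_det
    apply continuous_pi
    intro i
    apply continuous_pi
    intro j
    exact ((continuous_apply i).comp ((continuous_apply j).comp continuous_snd)).sub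
      ((continuous_apply i).comp continuous_fst)
  have hx₀Q : π x₀ ∈ Q := ⟨x₀, interior_subset hx₀, rfl⟩
  have hQTne : QT.Nonempty := ⟨(π x₀, fun _ => π x₀), hx₀Q, fun _ _ => hx₀Q⟩
  obtain ⟨⟨v₀, vs⟩, hvmem, hvmax⟩ := hQTcpt.exists_isMaxOn hQTne hφcont.continuousOn
  have hv₀Q : v₀ ∈ Q := hvmem.1
  have hvsQ : ∀ j, vs j ∈ Q := fun j => hvmem.2 j (Set.mem_univ j)
  set B : Matrix (Fin p) (Fin p) ℝ := Matrix.of (fun i j => vs j i - v₀ i) with hB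
  -- the maximum is positive
  have hlow : (ε/2)^p ≤ φ (v₀, vs) := by
    set pts : Fin p → (Fin p → ℝ) :=
      fun j => fun i => π x₀ i + (ε/2) * (if i = j then 1 else 0) with hpts
    have hptsQ : ∀ j, pts j ∈ Q := by
      intro j
      apply hball
      rw [Metric.mem_ball, dist_eq_norm]
      have : pts j - π x₀ = fun i => (ε/2) * (if i = j then 1 else 0) := by
        funext i; simp [hpts]
      rw [this]
      rw [pi_norm_lt_iff hε]
      intro i
      rw [Real.norm_eq_abs]
      by_cases h : i = j
      · rw [if_pos h, mul_one, abs_of_nonneg (by positivity)]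
        linarith
      · rw [if_neg h, mul_zero, abs_zero]
        exact hε
    have htuple : ((π x₀ : Fin p → ℝ), pts) ∈ QT := ⟨hx₀Q, fun j _ => hptsQ j⟩
    have hle := hvmax htuple
    have hdiag : Matrix.of (fun i j => pts j i - π x₀ i) = (ε/2) • (1 : Matrix (Fin p) (Fin p) ℝ) := by
      ext i j
      rcases eq_or_ne i j with h | h
      · subst h; simp [hpts, Matrix.one_apply]
      · simp [hpts, Matrix.one_apply, h]
    have : φ (π x₀, pts) = (ε/2)^p := by
      rw [hφ]
      simp only
      rw [hdiag, Matrix.det_smul, Matrix.det_one, mul_one]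
      rw [abs_of_nonneg (by positivity)]
      norm_num
    rw [← this]
    exact hle
  have hφpos : 0 < φ (v₀, vs) := lt_of_lt_of_le (by positivity) hlow
  have hdetB : B.det ≠ 0 := by
    intro h0
    rw [hφ] at hφpos
    simp only at hφpos
    rw [show (Matrix.of fun i j => vs j i - v₀ i) = B from rfl, h0] at hφpos
    simp at hφpos
  have hBunit : IsUnit B.det := isUnit_iff_ne_zero.mpr hdetB
  -- Cramer bound : the transformed body lies in the unit cube
  have hcoord : ∀ q ∈ Q, ∀ j, |(B⁻¹ *ᵥ (q - v₀)) j| ≤ 1 := by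
    intro q hq j
    set tt := B⁻¹ *ᵥ (q - v₀) with htt
    have hBt : B *ᵥ tt = q - v₀ := by
      rw [htt, Matrix.mulVec_mulVec, Matrix.mul_nonsing_inv _ hBunit, Matrix.one_mulVec]
    have hcram : (Matrix.updateCol B j (q - v₀)).det = B.det * tt j := by
      have h1 : Matrix.cramer B (B *ᵥ tt) = B.det • tt := by
        rw [Matrix.cramer_eq_adjugate_mulVec, Matrix.mulVec_mulVec, Matrix.adjugate_mul,
          Matrix.smul_mulVec, Matrix.one_mulVec]
      have h2 := congrFun h1 j
      rw [Matrix.cramer_apply, hBt] at h2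
      simpa using h2
    have hupd : Matrix.updateCol B j (q - v₀)
        = Matrix.of (fun i j' => (Function.update vs j q) j' i - v₀ i) := by
      ext i j'
      rcases eq_or_ne j' j with h | h
      · subst h
        simp [Matrix.updateCol_apply]
      · simp only [Matrix.updateCol_apply, if_neg h, Function.update_of_ne h, Matrix.of_apply]
        rw [hB]
        simp
    have hmemupd : ((v₀ : Fin p → ℝ), Function.update vs j q) ∈ QT := by
      refine ⟨hv₀Q, fun j' _ => ?_⟩
      rcases eq_or_ne j' j with h | h
      · subst h; simpa using hq
      · simpa [Function.update_of_ne h] using hvsQ j'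
    have hle := hvmax hmemupd
    have hle2 : |(Matrix.updateCol B j (q - v₀)).det| ≤ |B.det| := by
      rw [hupd]
      exact hle
    rw [hcram, abs_mul] at hle2
    have hfin : |B.det| * |tt j| ≤ |B.det| * 1 := by
      rw [mul_one]
      exact hle2
    exact le_of_mul_le_mul_left hfin (abs_pos.mpr hdetB)
  -- Euclidean space setup
  set eqv : (Fin p → ℝ) ≃ₗ[ℝ] EuclideanSpace ℝ (Fin p) :=
    (WithLp.linearEquiv 2 ℝ (Fin p → ℝ)).symm with heqv
  have happ : ∀ (f : Fin p → ℝ) (i : Fin p), (eqv f) i = f i := by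
    intro f i
    rw [heqv]
    simp [WithLp.linearEquiv]
  have hsymm : ∀ (y : EuclideanSpace ℝ (Fin p)) (i : Fin p), (eqv.symm y) i = y i := by
    intro y i
    conv_rhs => rw [← eqv.apply_symm_apply y]
    rw [happ]
  have hinnerE : ∀ (x y : EuclideanSpace ℝ (Fin p)), (inner ℝ x y : ℝ) = ∑ i, x i * y i := by
    intro x y
    rw [PiLp.inner_apply]
    simp [RCLike.inner_apply]
    exact Finset.sum_congr rfl (fun i _ => mul_comm _ _)
  have hBinvUnit : IsUnit (B⁻¹).det := by
    rw [Matrix.det_nonsing_inv]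
    refine isUnit_iff_ne_zero.mpr ?_
    rw [Ring.inverse_eq_inv']
    exact inv_ne_zero hdetB
  haveI hBinvInv : Invertible (B⁻¹) := Matrix.invertibleOfIsUnitDet _ hBinvUnit
  set bb : Basis (Fin p) ℝ (EuclideanSpace ℝ (Fin p)) :=
    (Pi.basisFun ℝ (Fin p)).map ((Matrix.toLinearEquiv' (B⁻¹) hBinvInv).trans eqv) with hbb
  have hbbapply : ∀ j, bb j = eqv (B⁻¹ *ᵥ Pi.single j 1) := by
    intro j
    rw [hbb]
    simp only [Basis.map_apply, Pi.basisFun_apply, LinearEquiv.trans_apply,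
      Matrix.toLinearEquiv'_apply, Matrix.toLin'_apply]
    first
    | rfl
    | (congr 1
       rw [show (B⁻¹.toLinearEquiv' hBinvInv) (Pi.single j 1)
          = Matrix.toLin' B⁻¹ (Pi.single j 1) from rfl, Matrix.toLin'_apply])
  set L : Submodule ℤ (EuclideanSpace ℝ (Fin p)) := span ℤ (Set.range ⇑bb) with hL
  haveI hLdisc : DiscreteTopology L := inferInstance
  haveI hLZ : IsZLattice ℝ L := instIsZLatticeRealSpan bb
  have hrkE : Module.finrank ℝ (EuclideanSpace ℝ (Fin p)) = p := by simp
  -- norm facts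
  have hsum_le : ∀ v : EuclideanSpace ℝ (Fin p), (∑ i, v i) ≤ Real.sqrt p * ‖v‖ := by
    intro v
    have h1 : (inner ℝ v (eqv (fun _ : Fin p => (1:ℝ))) : ℝ) = ∑ i, v i := by
      rw [hinnerE]
      simp [happ]
    have h2 : ‖eqv (fun _ : Fin p => (1:ℝ))‖ = Real.sqrt p := by
      rw [EuclideanSpace.norm_eq]
      congr 1
      have : ∀ i : Fin p, ‖(eqv (fun _ : Fin p => (1:ℝ))) i‖ ^ 2 = 1 := by
        intro i
        rw [happ]
        norm_num
      rw [Finset.sum_congr rfl (fun i _ => this i)]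
      simp
    calc (∑ i, v i) = (inner ℝ v (eqv (fun _ : Fin p => (1:ℝ))) : ℝ) := h1.symm
    _ ≤ |(inner ℝ v (eqv (fun _ : Fin p => (1:ℝ))) : ℝ)| := le_abs_self _
    _ ≤ ‖v‖ * ‖eqv (fun _ : Fin p => (1:ℝ))‖ := abs_real_inner_le_norm _ _
    _ = Real.sqrt p * ‖v‖ := by rw [h2]; ring
  -- the ball of radius 1/(2p) around cc is inside the transformed body
  set cc : EuclideanSpace ℝ (Fin p) := eqv (fun _ : Fin p => 1/(2*(p:ℝ))) with hcc
  set rr : ℝ := 1/(2*(p:ℝ)) with hrr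
  have hrrpos : 0 < rr := by rw [hrr]; positivity
  have hball2 : ∀ y : EuclideanSpace ℝ (Fin p), ‖y - cc‖ ≤ rr →
      (B *ᵥ (eqv.symm y) + v₀) ∈ Q := by
    intro y hy
    have hcoordy : ∀ i, |y i - rr| ≤ rr := by
      intro i
      have h1 : |(y - cc) i| ≤ ‖y - cc‖ := euclid_abs_le_norm _ i
      have h2 : (y - cc) i = y i - rr := by
        have : (y - cc) i = y i - cc i := rfl
        rw [this, hcc, happ]
      rw [h2] at h1
      exact h1.trans hy
    have hynn : ∀ i, 0 ≤ y i := by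
      intro i
      have := abs_le.mp (hcoordy i)
      linarith [this.1]
    have hsumy : (∑ i, y i) ≤ 1 := by
      have h1 : (∑ i, (y - cc) i) ≤ Real.sqrt p * ‖y - cc‖ := hsum_le _
      have h2 : ∀ i, (y - cc) i = y i - rr := by
        intro i
        have : (y - cc) i = y i - cc i := rfl
        rw [this, hcc, happ]
      rw [Finset.sum_congr rfl (fun i _ => h2 i), Finset.sum_sub_distrib] at h1
      simp only [Finset.sum_const, Finset.card_univ, Fintype.card_fin, nsmul_eq_mul] at h1
      -- ∑ y i ≤ p * rr + √p * ‖y-cc‖ ≤ 1/2 + √p * rr ≤ 1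
      have h3 : Real.sqrt p * ‖y - cc‖ ≤ Real.sqrt p * rr :=
        mul_le_mul_of_nonneg_left hy (Real.sqrt_nonneg _)
      have h4 : (p:ℝ) * rr = 1/2 := by
        rw [hrr]
        field_simp
      have h5 : Real.sqrt p ≤ (p:ℝ) := by
        nth_rewrite 2 [show (p:ℝ) = Real.sqrt ((p:ℝ)^2) from (Real.sqrt_sq hpPos.le).symm]
        apply Real.sqrt_le_sqrt
        nlinarith [hp1R]
      have h6 : Real.sqrt p * rr ≤ 1/2 := by
        calc Real.sqrt p * rr ≤ (p:ℝ) * rr := mul_le_mul_of_nonneg_right h5 hrrpos.le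
        _ = 1/2 := h4
      linarith
    -- convex combination
    have hmv : ∀ (f : Fin p → ℝ) (i : Fin p), (B *ᵥ f) i = ∑ j, B i j * f j :=
      fun f i => rfl
    have hcomb : B *ᵥ (eqv.symm y) + v₀
        = (1 - ∑ i, y i) • v₀ + ∑ j, (y j) • (vs j) := by
      funext i
      simp only [Pi.add_apply, Pi.smul_apply, smul_eq_mul, Finset.sum_apply]
      rw [hmv]
      have e1 : ∀ j, B i j * (eqv.symm y) j = y j * vs j i - y j * v₀ i := by
        intro j
        rw [hsymm]
        show (vs j i - v₀ i) * y j = _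
        ring
      rw [Finset.sum_congr rfl (fun j _ => e1 j), Finset.sum_sub_distrib, ← Finset.sum_mul]
      ring
    rw [hcomb]
    have hw : (0:ℝ) ≤ 1 - ∑ i, y i := by linarith
    have h0 : ∀ o ∈ (Finset.univ : Finset (Option (Fin p))),
        0 ≤ (Option.elim o (1 - ∑ i, y i) (fun j => y j)) := by
      rintro (_|j) _
      · exact hw
      · exact hynn j
    have h1 : ∑ o : Option (Fin p), (Option.elim o (1 - ∑ i, y i) (fun j => y j)) = 1 := by
      rw [Fintype.sum_option]
      simp
    have hzQ : ∀ o ∈ (Finset.univ : Finset (Option (Fin p))),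
        (Option.elim o v₀ (fun j => vs j)) ∈ Q := by
      rintro (_|j) _
      · exact hv₀Q
      · exact hvsQ j
    have hmem := hQconv.sum_mem h0 h1 hzQ
    rw [Fintype.sum_option] at hmem
    simpa using hmem
  have hmvs : ∀ (M : Matrix (Fin p) (Fin p) ℝ) (j i : Fin p), (M *ᵥ Pi.single j 1) i = M i j := by
    intro M j i
    rw [Matrix.mulVec_single]
    exact mul_one _
  obtain ⟨lam, hlam⟩ : ∃ l : ℝ, l = 2 * (p:ℝ) * Real.sqrt ((4/3:ℝ)^p) := ⟨_, rfl⟩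
  have hlampos : 0 < lam := by rw [hlam]; positivity
  by_cases hdual : ∀ u : EuclideanSpace ℝ (Fin p), u ≠ 0 →
      (∀ x ∈ L, ∃ z : ℤ, (inner ℝ u x : ℝ) = (z:ℝ)) → lam ≤ ‖u‖
  · -- transference succeeds: the body contains a mixed-integer point, contradiction
    exfalso
    obtain ⟨y₀, hy₀⟩ : ∃ y : EuclideanSpace ℝ (Fin p), y = eqv (B⁻¹ *ᵥ (0 - v₀)) := ⟨_, rfl⟩
    obtain ⟨v, hvL, hvb⟩ := transfer p _ L hLdisc hLZ hrkE lam hlampos hdual (cc - y₀)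
    have hlamsq : lam^2 = 4*(p:ℝ)^2*((4/3:ℝ)^p) := by
      rw [hlam, mul_pow, mul_pow, Real.sq_sqrt (by positivity)]
      ring
    have hdist2 : ‖cc - y₀ - v‖^2 ≤ rr^2 := by
      have h1 : rr^2 * lam^2 = (4/3:ℝ)^p := by
        rw [hrr, hlamsq]
        field_simp
        ring
      have hlam2pos : 0 < lam^2 := by positivity
      have h2 : ‖cc - y₀ - ↑v‖^2 * lam^2 ≤ rr^2 * lam^2 := by
        rw [h1]
        have h4 : ‖cc - y₀ - ↑v‖^2 * lam^2 ≤ (4/3:ℝ)^p - 3/4 := by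
          have h5 : cc - y₀ - ↑v = (cc - y₀) - ↑v := rfl
          rw [h5]
          exact hvb
        linarith
      exact le_of_mul_le_mul_right h2 hlam2pos
    have hdist : ‖(y₀ + ↑v) - cc‖ ≤ rr := by
      have heq2 : (y₀ + ↑v) - cc = -(cc - y₀ - ↑v) := by abel
      rw [heq2, norm_neg]
      calc ‖cc - y₀ - ↑v‖ = Real.sqrt (‖cc - y₀ - ↑v‖^2) := (Real.sqrt_sq (norm_nonneg _)).symm
      _ ≤ Real.sqrt (rr^2) := Real.sqrt_le_sqrt hdist2
      _ = rr := Real.sqrt_sq hrrpos.le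
    have hqQ := hball2 _ hdist
    obtain ⟨c, hc⟩ := (mem_span_range_iff_exists_fun ℤ).mp (show (v : EuclideanSpace ℝ (Fin p)) ∈ span ℤ (Set.range ⇑bb) from hvL)
    have h1 : eqv.symm y₀ = B⁻¹ *ᵥ (0 - v₀) := by
      rw [hy₀]
      exact eqv.symm_apply_apply _
    have h2 : eqv.symm (v : EuclideanSpace ℝ (Fin p)) = ∑ j, (c j : ℝ) • (B⁻¹ *ᵥ (Pi.single j (1:ℝ) : Fin p → ℝ)) := by
      rw [← hc, map_sum]
      apply Finset.sum_congr rfl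
      intro j _
      rw [map_zsmul, hbbapply j, eqv.symm_apply_apply, Int.cast_smul_eq_zsmul ℝ]
    have h3 : B *ᵥ (eqv.symm (y₀ + ↑v)) + v₀ = fun j => (c j : ℝ) := by
      rw [map_add, h1, h2, Matrix.mulVec_add]
      have h4 : B *ᵥ (B⁻¹ *ᵥ (0 - v₀)) = 0 - v₀ := by
        rw [Matrix.mulVec_mulVec, Matrix.mul_nonsing_inv _ hBunit, Matrix.one_mulVec]
      have h5 : B *ᵥ (∑ j, (c j : ℝ) • (B⁻¹ *ᵥ (Pi.single j (1:ℝ) : Fin p → ℝ)))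
          = ∑ j, (c j : ℝ) • (Pi.single j (1:ℝ) : Fin p → ℝ) := by
        have h6 : ∀ f, B *ᵥ f = Matrix.mulVecLin B f := fun f => rfl
        rw [h6, map_sum]
        apply Finset.sum_congr rfl
        intro j _
        rw [_root_.map_smul]
        congr 1
        rw [← h6, Matrix.mulVec_mulVec, Matrix.mul_nonsing_inv _ hBunit, Matrix.one_mulVec]
      rw [h4, h5]
      funext i
      simp only [Pi.add_apply, Pi.sub_apply, Pi.zero_apply, Finset.sum_apply, Pi.smul_apply,
        smul_eq_mul]
      rw [Finset.sum_eq_single i]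
      · simp
      · intro j _ hji
        rw [Pi.single_apply, if_neg (Ne.symm hji), mul_zero]
      · intro h
        exact absurd (Finset.mem_univ i) h
    rw [h3] at hqQ
    obtain ⟨x, hxP, hπx⟩ := hqQ
    have hxmix : x ∈ mixedIntSet n p := by
      intro i hi
      refine ⟨c ⟨(i:ℕ), hi⟩, ?_⟩
      have h7 : x (Fin.castLE hp ⟨(i:ℕ), hi⟩) = (fun j => (c j : ℝ)) ⟨(i:ℕ), hi⟩ := by
        rw [← hπx]
      have h8 : Fin.castLE hp ⟨(i:ℕ), hi⟩ = i := by
        apply Fin.ext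
        simp
      rw [h8] at h7
      exact h7
    have : x ∈ P ∩ mixedIntSet n p := ⟨hxP, hxmix⟩
    rw [hempty] at this
    exact this
  · -- a short dual vector exists: it gives the flat direction
    push_neg at hdual
    obtain ⟨u, hu0, huD, hulam⟩ := hdual
    have hbbL : ∀ j, bb j ∈ L := fun j => subset_span ⟨j, rfl⟩
    choose dz hdz using fun j => huD (bb j) (hbbL j)
    obtain ⟨dd, hdd⟩ : ∃ f : Fin p → ℝ, f = fun j => (dz j : ℝ) := ⟨_, rfl⟩
    set d : Fin n → ℤ := fun i => if h : (i:ℕ) < p then dz ⟨(i:ℕ), h⟩ else 0 with hd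
    have hdcast : ∀ j : Fin p, d (Fin.castLE hp j) = dz j := by
      intro j
      have hj : ((Fin.castLE hp j : Fin n) : ℕ) < p := j.2
      simp only [hd]
      rw [dif_pos hj]
      exact congrArg dz (Fin.ext rfl)
    have hd0 : d ≠ 0 := by
      intro hzero
      apply hu0
      apply eq_zero_of_inner_basis_zero bb
      intro j
      rw [hdz j]
      rw [← hdcast j, hzero]
      simp
    have hdzero : ∀ i : Fin n, p ≤ (i:ℕ) → d i = 0 := by
      intro i hi
      simp only [hd]
      rw [dif_neg (by omega)]
    -- the key inner-product identity
    have hkey : ∀ f : Fin p → ℝ, (inner ℝ u (eqv (B⁻¹ *ᵥ f)) : ℝ) = dd ⬝ᵥ f := by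
      intro f
      rw [hinnerE]
      have h1 : ∀ i, (eqv (B⁻¹ *ᵥ f)) i = ∑ j, B⁻¹ i j * f j := by
        intro i
        rw [happ]
        rfl
      rw [Finset.sum_congr rfl (fun i _ => by rw [h1])]
      have h2 : ∑ i, u i * ∑ j, B⁻¹ i j * f j = ∑ j, (∑ i, u i * B⁻¹ i j) * f j := by
        simp_rw [Finset.mul_sum, Finset.sum_mul]
        rw [Finset.sum_comm]
        apply Finset.sum_congr rfl
        intro j _
        apply Finset.sum_congr rfl
        intro i _
        ring
      rw [h2]
      have hdot : dd ⬝ᵥ f = ∑ j, dd j * f j := rfl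
      rw [hdot]
      apply Finset.sum_congr rfl
      intro j _
      have h3 : (∑ i, u i * B⁻¹ i j) = dd j := by
        rw [hdd]
        show (∑ i, u i * B⁻¹ i j) = ((dz j : ℤ) : ℝ)
        have h4 := hdz j
        rw [hinnerE, hbbapply j] at h4
        rw [← h4]
        apply Finset.sum_congr rfl
        intro i _
        rw [happ, hmvs]
      rw [h3]
    -- bound on the inner products over the body
    obtain ⟨M, hM⟩ : ∃ m : ℝ, m = lam * Real.sqrt p := ⟨_, rfl⟩
    have hbound : ∀ x ∈ P, |dd ⬝ᵥ (π x - v₀)| ≤ M := by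
      intro x hx
      have hyx : ‖eqv (B⁻¹ *ᵥ (π x - v₀))‖ ≤ Real.sqrt p := by
        rw [EuclideanSpace.norm_eq]
        have hcc1 : ∀ i : Fin p, ‖(eqv (B⁻¹ *ᵥ (π x - v₀))) i‖^2 ≤ 1 := by
          intro i
          rw [happ, Real.norm_eq_abs, sq_abs]
          have h5 := hcoord (π x) ⟨x, hx, rfl⟩ i
          nlinarith [abs_nonneg ((B⁻¹ *ᵥ (π x - v₀)) i), sq_abs ((B⁻¹ *ᵥ (π x - v₀)) i)]
        calc Real.sqrt (∑ i, ‖(eqv (B⁻¹ *ᵥ (π x - v₀))) i‖^2)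
            ≤ Real.sqrt (∑ _i : Fin p, (1:ℝ)) :=
              Real.sqrt_le_sqrt (Finset.sum_le_sum (fun i _ => hcc1 i))
        _ = Real.sqrt p := by simp
      rw [← hkey]
      calc |(inner ℝ u (eqv (B⁻¹ *ᵥ (π x - v₀))) : ℝ)|
          ≤ ‖u‖ * ‖eqv (B⁻¹ *ᵥ (π x - v₀))‖ := abs_real_inner_le_norm _ _
      _ ≤ lam * Real.sqrt p := mul_le_mul hulam.le hyx (norm_nonneg _) hlampos.le
      _ = M := hM.symm
    obtain ⟨a0, ha0⟩ : ∃ a : ℝ, a = dd ⬝ᵥ v₀ := ⟨_, rfl⟩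
    obtain ⟨ρ, hρ1, hρ2⟩ := exists_rat_btwn (show a0 - M - 1 < a0 - M by linarith)
    refine ⟨d, ρ, hd0, hdzero, ?_⟩
    intro x hx
    have hsplit : (fun i => ((d i : ℤ):ℝ)) ⬝ᵥ x = dd ⬝ᵥ (π x) := by
      show ∑ i, ((d i : ℤ):ℝ) * x i = ∑ j, dd j * (π x) j
      rw [← Finset.sum_subset (Finset.subset_univ (Finset.univ.map (Fin.castLEEmb hp)))
        (by
          intro i _ hni
          have : ¬ ((i:ℕ) < p) := by
            intro hip
            apply hni
            rw [Finset.mem_map]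
            exact ⟨⟨(i:ℕ), hip⟩, Finset.mem_univ _, Fin.ext rfl⟩
          rw [hd]
          simp only
          rw [dif_neg this]
          simp)]
      rw [Finset.sum_map]
      apply Finset.sum_congr rfl
      intro j _
      have h6 : (Fin.castLEEmb hp) j = Fin.castLE hp j := rfl
      rw [h6, hdcast j, hdd]
    have hd2 : dd ⬝ᵥ (π x) = a0 + dd ⬝ᵥ (π x - v₀) := by
      rw [ha0, ← dotProduct_add]
      congr 1
      funext j
      simp
    have habs := abs_le.mp (hbound x hx)
    have hM2 : 2*M + 1 ≤ 14*((n:ℝ)+1)*p*(2:ℝ)^(((p:ℝ)*((p:ℝ)-1))/4) := by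
      have h2M := key_arith n p hp1 hp
      rw [hM, hlam]
      calc 2*(2*(p:ℝ)*Real.sqrt ((4/3:ℝ)^p)*Real.sqrt p) + 1
          = 4*(p:ℝ)*Real.sqrt ((4/3:ℝ)^p)*Real.sqrt p + 1 := by ring
      _ ≤ _ := h2M
    constructor
    · rw [hsplit, hd2]
      have := habs.1
      have := hρ2
      linarith
    · rw [hsplit, hd2]
      have := habs.2
      have := hρ1
      linarith



end flat

set_option maxHeartbeats 1000000

/-- **Flatness result for MIQP.** Assume `P = {x : Wx ≤ w}` is
full-dimensional and bounded, and let `F = P ∩ (ℤᵖ × ℝ^{n−p})`. Either there is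
`x⋄ ∈ F` with `f(x⋄) − f_inf ≤ (1 − 1/(8(n+1)²))·(f_sup − f_inf)`, or there are a
nonzero `d ∈ ℤⁿ` with `d_{p+1} = ⋯ = d_n = 0` and `ρ ∈ ℚ` with
`{dᵀx : x ∈ P} ⊆ [ρ, ρ + 14(n+1)·p·2^{p(p−1)/4}]`. -/
theorem stmt_15 (n m p : ℕ) (hp : p ≤ n)
    (H : Matrix (Fin n) (Fin n) ℚ) (hH : H.IsSymm) (h : Fin n → ℚ)
    (W : Matrix (Fin m) (Fin n) ℚ) (w : Fin m → ℚ)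
    (hfull : (interior {x : Fin n → ℝ |
        ∀ i, (W.map ((↑) : ℚ → ℝ)).mulVec x i ≤ (w i : ℝ)}).Nonempty)
    (hbdd : Bornology.IsBounded {x : Fin n → ℝ |
        ∀ i, (W.map ((↑) : ℚ → ℝ)).mulVec x i ≤ (w i : ℝ)}) :
    (∃ x ∈ {x : Fin n → ℝ |
          ∀ i, (W.map ((↑) : ℚ → ℝ)).mulVec x i ≤ (w i : ℝ)} ∩ mixedIntSet n p,
      qf (H.map ((↑) : ℚ → ℝ)) (fun i => (h i : ℝ)) x -
          sInf (qf (H.map ((↑) : ℚ → ℝ)) (fun i => (h i : ℝ)) ''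
            ({x : Fin n → ℝ |
                ∀ i, (W.map ((↑) : ℚ → ℝ)).mulVec x i ≤ (w i : ℝ)} ∩
              mixedIntSet n p)) ≤
        (1 - 1 / (8 * ((n : ℝ) + 1) ^ 2)) *
          (sSup (qf (H.map ((↑) : ℚ → ℝ)) (fun i => (h i : ℝ)) ''
              ({x : Fin n → ℝ |
                  ∀ i, (W.map ((↑) : ℚ → ℝ)).mulVec x i ≤ (w i : ℝ)} ∩
                mixedIntSet n p)) -
            sInf (qf (H.map ((↑) : ℚ → ℝ)) (fun i => (h i : ℝ)) ''
              ({x : Fin n → ℝ |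
                  ∀ i, (W.map ((↑) : ℚ → ℝ)).mulVec x i ≤ (w i : ℝ)} ∩
                mixedIntSet n p)))) ∨
    ∃ (d : Fin n → ℤ) (ρ : ℚ), d ≠ 0 ∧
      (∀ i : Fin n, p ≤ (i : ℕ) → d i = 0) ∧
      {r : ℝ | ∃ x ∈ {x : Fin n → ℝ |
            ∀ i, (W.map ((↑) : ℚ → ℝ)).mulVec x i ≤ (w i : ℝ)},
          r = (fun i => ((d i : ℤ) : ℝ)) ⬝ᵥ x} ⊆
        Set.Icc (ρ : ℝ)
          ((ρ : ℝ) +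
            14 * ((n : ℝ) + 1) * (p : ℝ) *
              (2 : ℝ) ^ (((p : ℝ) * ((p : ℝ) - 1)) / 4)) := by
  classical
  set P : Set (Fin n → ℝ) :=
    {x : Fin n → ℝ | ∀ i, (W.map ((↑) : ℚ → ℝ)).mulVec x i ≤ (w i : ℝ)} with hPdef
  have hPcl : IsClosed P := by
    have heq : P = ⋂ i, {x : Fin n → ℝ | ((W.map ((↑) : ℚ → ℝ)).mulVec x) i ≤ (w i : ℝ)} := by
      ext x
      simp [hPdef, Set.mem_iInter]
    rw [heq]
    refine isClosed_iInter fun i => ?_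
    have hcont : Continuous fun x : Fin n → ℝ => ((W.map ((↑) : ℚ → ℝ)).mulVec x) i := by
      show Continuous fun x : Fin n → ℝ => ∑ j, (W.map ((↑) : ℚ → ℝ)) i j * x j
      apply continuous_finset_sum
      intro j _
      exact continuous_const.mul (continuous_apply j)
    exact isClosed_le hcont continuous_const
  have hPconv : Convex ℝ P := by
    intro x hx y hy a b ha hb hab
    intro i
    have hxi := hx i
    have hyi := hy i
    have hlin : (W.map ((↑) : ℚ → ℝ)).mulVec (a • x + b • y) i
        = a * (W.map ((↑) : ℚ → ℝ)).mulVec x i + b * (W.map ((↑) : ℚ → ℝ)).mulVec y i := by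
      rw [Matrix.mulVec_add, Matrix.mulVec_smul, Matrix.mulVec_smul]
      rfl
    rw [hlin]
    calc a * (W.map ((↑) : ℚ → ℝ)).mulVec x i + b * (W.map ((↑) : ℚ → ℝ)).mulVec y i
        ≤ a * (w i : ℝ) + b * (w i : ℝ) :=
          add_le_add (mul_le_mul_of_nonneg_left hxi ha) (mul_le_mul_of_nonneg_left hyi hb)
    _ = (w i : ℝ) := by rw [← add_mul, hab, one_mul]
  rcases Set.eq_empty_or_nonempty (P ∩ mixedIntSet n p) with hF | hF
  · right
    have hp1 : 1 ≤ p := by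
      by_contra hp0
      push_neg at hp0
      have hp00 : p = 0 := by omega
      subst hp00
      obtain ⟨x₀, hx₀⟩ := hfull
      have hmem : x₀ ∈ P ∩ mixedIntSet n 0 :=
        ⟨interior_subset hx₀, fun i hi => absurd hi (Nat.not_lt_zero _)⟩
      rw [hF] at hmem
      exact hmem
    obtain ⟨d, ρ, hd0, hdz, hbounds⟩ :=
      flat_of_no_mixed_point hp hp1 P hPconv hPcl hbdd hfull hF
    refine ⟨d, ρ, hd0, hdz, ?_⟩
    rintro r ⟨x, hx, rfl⟩
    exact ⟨(hbounds x hx).1, (hbounds x hx).2⟩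
  · left
    have hcoef : (0:ℝ) ≤ 1 - 1 / (8 * ((n : ℝ) + 1) ^ 2) := by
      have h1 : (1:ℝ) ≤ (n:ℝ) + 1 := by
        have : (0:ℝ) ≤ (n:ℝ) := Nat.cast_nonneg n
        linarith
      have h2 : (8:ℝ) ≤ 8 * ((n:ℝ)+1)^2 := by nlinarith
      have h3 : 1 / (8 * ((n : ℝ) + 1) ^ 2) ≤ 1/8 :=
        one_div_le_one_div_of_le (by norm_num) h2
      linarith
    exact left_branch P hPcl hbdd (mixedIntSet n p) (mixed_closed n p)
      (qf (H.map ((↑) : ℚ → ℝ)) (fun i => (h i : ℝ)))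
      (qf_continuous _ _) hF _ hcoef
end
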